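/- arXiv:0903.1756 — 3 statements merged into one kernel-verified Lean document; each statement's English description precedes it below -/
import Mathlib

section
/- Fix 0 ≤ i < I, an edge g ∉ B_{≤i}, and an odd integer l ≥ 1. (a) On the event {g ∈ B_{i+1} and TF_i ∪ {g} is triangle-free}: the event A_{g,l} implies the event {g ∈ TF_{i+1}}, which in turn implies the event A_{g,l+1}. (b) On the event {g ∉ B_{≤i+1} and TF_i ∪ {g} is triangle-free}: the event A_{g,l} implies the event {TF_{i+1} ∪ {g} is triangle-free}, which in turn implies the event A_{g,l+1}. -/
/-!
Call an edge `f` *blocked* if it closes a triangle with two edges of `TF_{i+1}` that are already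
present when `f` is born, i.e. lie in `TF_i` or have smaller birthtime. The greedy pass keeps an
edge of `B_{i+1}` exactly when it is not blocked, and an edge born after `δn^{-1/2}` can still be
added to `TF_{i+1}` exactly when it is not blocked. Since `TF_{i+1} ∖ TF_i ⊆ B_{i+1} ⊆ B^⋆_{i+1}`,
`f` is blocked iff some child `G` of the node `f` of `T^⋆` consists of edges of `TF_{i+1}` born
before `min{β(f), δn^{-1/2}}`; each such edge is in `B_{i+1}`, so it lies in `TF_{i+1}` iff it
is not blocked itself. Hence survival and non-blocking agree down the tree up to a parity shift:
by induction on the depth, survival at odd depth implies non-blocking, which implies survival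
at even depth.
-/

open MeasureTheory Finset Filter

namespace TF

noncomputable section
open scoped Classical

/-- Edges of the complete graph on `Fin n` are elements of `Sym2 (Fin n)`. -/
abbrev Edge (n : ℕ) := Sym2 (Fin n)

/-- The edge set of the complete graph `K_n` (non-diagonal pairs). -/
def allEdges (n : ℕ) : Finset (Edge n) := Finset.univ.filter (fun e => ¬ e.IsDiag)

/-- Three edges form a triangle. -/
def IsTri {n : ℕ} (e f g : Edge n) : Prop :=
  ∃ a b c : Fin n, a ≠ b ∧ b ≠ c ∧ a ≠ c ∧ e = s(a, b) ∧ f = s(b, c) ∧ g = s(a, c)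

/-- An edge set is triangle-free. -/
def TriFree {n : ℕ} (T : Finset (Edge n)) : Prop :=
  ∀ e ∈ T, ∀ f ∈ T, ∀ g ∈ T, ¬ IsTri e f g

/-- Adding `e` to `T` does not create a triangle. -/
def AddOK {n : ℕ} (T : Finset (Edge n)) (e : Edge n) : Prop :=
  ∀ f ∈ T, ∀ g ∈ T, ¬ IsTri e f g

/-- Traverse a list of edges, adding each to the current graph unless
its addition creates a triangle (or it is a loop). -/
def greedy {n : ℕ} (T : Finset (Edge n)) : List (Edge n) → Finset (Edge n)
  | [] => T
  | e :: l => if AddOK T e ∧ ¬ e.IsDiag then greedy (insert e T) l else greedy T l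

/-- The edges of `s`, listed in increasing order of birthtime. -/
def sortByBirth {n : ℕ} (β : Edge n → ℝ) (s : Finset (Edge n)) : List (Edge n) :=
  s.toList.mergeSort (fun a b => β a ≤ β b)

/-- `δ := 1/⌊n^ε⌋`. -/
def del (n : ℕ) (ε : ℝ) : ℝ := 1 / (⌊(n : ℝ) ^ ε⌋₊ : ℝ)

/-- `I := δ^{-2} = ⌊n^ε⌋²`. -/
def Inat (n : ℕ) (ε : ℝ) : ℕ := (⌊(n : ℝ) ^ ε⌋₊) ^ 2

/-- `M := n^{20000ε}`. -/
def Mc (n : ℕ) (ε : ℝ) : ℝ := (n : ℝ) ^ (20000 * ε)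

/-- The imaginary error function `erfi(x) = (2/√π)∫₀ˣ exp(t²) dt`. -/
def erfi (x : ℝ) : ℝ := (2 / Real.sqrt Real.pi) * ∫ t in (0:ℝ)..x, Real.exp (t ^ 2)

/-- `Φ` is the inverse function of `y ↦ (√π/2)·erfi y`; equivalently it is the
solution of `Φ(0) = 0`, `Φ'(x) = exp (-Φ(x)²)`. -/
def Phi : ℝ → ℝ := Function.invFun (fun y : ℝ => (Real.sqrt Real.pi / 2) * erfi y)

/-- `φ(x) := exp (-Φ(x)²)`, the derivative of `Φ`. -/
def phi (x : ℝ) : ℝ := Real.exp (-(Phi x) ^ 2)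

/-- `m := ⌊n^{100ε}⌋·φ(iδ)⁻¹`. -/
def mc (n : ℕ) (ε : ℝ) (i : ℕ) : ℝ := (⌊(n : ℝ) ^ (100 * ε)⌋₊ : ℝ) * (phi (i * del n ε))⁻¹

/-- `γ(i) := max{δΦ(iδ)φ(iδ), δ²φ(iδ)²}`. -/
def gam (n : ℕ) (ε : ℝ) (i : ℕ) : ℝ :=
  max (del n ε * Phi (i * del n ε) * phi (i * del n ε))
      (del n ε ^ 2 * phi (i * del n ε) ^ 2)

/-- `Γ(0) := n^{-30ε}`, `Γ(i) := Γ(i-1)(1 + 10γ(i-1))`. -/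
def Gam (n : ℕ) (ε : ℝ) : ℕ → ℝ
  | 0 => (n : ℝ) ^ (-30 * ε)
  | i + 1 => Gam n ε i * (1 + 10 * gam n ε i)

/-- `x = a(1 ± b)`, i.e. `a(1-b) ≤ x ≤ a(1+b)`. -/
def within (x a b : ℝ) : Prop := a * (1 - b) ≤ x ∧ x ≤ a * (1 + b)

/-- The uniform probability measure on a set of reals. -/
def unif (s : Set ℝ) : Measure ℝ := (volume s)⁻¹ • volume.restrict s

/-- The product measure under which every edge of `K_n` receives an
independent uniform birthtime in `[0,1]`. -/
def stepMeasure (n : ℕ) : Measure (Edge n → ℝ) :=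
  Measure.pi fun _ => unif (Set.Icc 0 1)

/-- `Λ₀(g,i)`: pairs `{g₁,g₂} ⊆ TF_i` forming a triangle with `g`. -/
def Lam0 {n : ℕ} (TFi : Finset (Edge n)) (g : Edge n) : Finset (Finset (Edge n)) :=
  (TFi.powersetCard 2).filter
    (fun P => ∃ g1 ∈ P, ∃ g2 ∈ P, g1 ≠ g2 ∧ IsTri g g1 g2)

/-- `Λ₁(g,i)`: singletons (identified with edges) `g₁ ∉ B_{≤i}` such that some
`g₂ ∈ TF_i` makes `{g,g₁,g₂}` a triangle and `TF_i ∪ {g₁}` is triangle-free. -/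
def Lam1 {n : ℕ} (TFi Bprev : Finset (Edge n)) (g : Edge n) : Finset (Edge n) :=
  (allEdges n \ Bprev).filter
    (fun g1 => (∃ g2 ∈ TFi, IsTri g g1 g2) ∧ TriFree (insert g1 TFi))

/-- `Λ₂(g,i)`: pairs `{g₁,g₂} ⊆ K_n ∖ B_{≤i}` forming a triangle with `g`
such that `TF_i ∪ {g_j}` is triangle-free for both `j ∈ {1,2}`. -/
def Lam2 {n : ℕ} (TFi Bprev : Finset (Edge n)) (g : Edge n) : Finset (Finset (Edge n)) :=
  ((allEdges n \ Bprev).powersetCard 2).filter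
    (fun P => (∃ g1 ∈ P, ∃ g2 ∈ P, g1 ≠ g2 ∧ IsTri g g1 g2) ∧
      ∀ f ∈ P, TriFree (insert f TFi))

/-- The process is well-behaved at step `i` (the precondition of the
key lemma), for a given instance `(TF_i, B_{≤i})`. -/
def WellBehaved (n : ℕ) (ε : ℝ) (i : ℕ) (TFi Bprev : Finset (Edge n)) : Prop :=
  (∀ g ∈ allEdges n, ((Lam0 TFi g).card : ℝ) ≤ i * (n : ℝ) ^ (5 * ε) ∧
      ((Lam1 TFi Bprev g).card : ℝ) ≤ i * Real.sqrt n) ∧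
  (∀ g ∈ allEdges n \ Bprev,
    within ((Lam1 TFi Bprev g).card : ℝ)
      (2 * Real.sqrt n * Phi (i * del n ε) * phi (i * del n ε)) (Gam n ε i) ∧
    within ((Lam2 TFi Bprev g).card : ℝ)
      ((n : ℝ) * phi (i * del n ε) ^ 2) (Gam n ε i))

/-- Structural properties of any instance of the state `(TF_i, B_{≤i})` of the
process: `TF_i ⊆ B_{≤i} ⊆ K_n` and `TF_i` is triangle-free. -/
def Instance (n : ℕ) (TFi Bprev : Finset (Edge n)) : Prop :=
  TFi ⊆ Bprev ∧ Bprev ⊆ allEdges n ∧ TriFree TFi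

/-- The set `B_{i+1}` determined by the fresh birthtimes `β = β_{i+1}`. -/
def Bnext (n : ℕ) (ε : ℝ) (Bprev : Finset (Edge n)) (β : Edge n → ℝ) : Finset (Edge n) :=
  (allEdges n \ Bprev).filter (fun f => β f < del n ε * (n : ℝ) ^ (-(1:ℝ)/2))

/-- The graph `TF_{i+1}`, obtained by traversing the edges of `B_{i+1}` in
increasing order of birthtime, adding each unless a triangle is created. -/
def TFnext (n : ℕ) (ε : ℝ) (TFi Bprev : Finset (Edge n)) (β : Edge n → ℝ) : Finset (Edge n) :=
  greedy TFi (sortByBirth β (Bnext n ε Bprev β))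

/-- `B^⋆_{i+1}` as a function of the birthtimes: the edges outside `B_{≤i}`
with birthtime below `M·n^{-1/2}`. -/
def BstarOf (n : ℕ) (ε : ℝ) (Bprev : Finset (Edge n)) (β : Edge n → ℝ) : Finset (Edge n) :=
  (allEdges n \ Bprev).filter (fun f => β f < Mc n ε * (n : ℝ) ^ (-(1:ℝ)/2))

/-- `B^*_{i+1}` as a function of the birthtimes: the edges outside `B_{≤i}`
with birthtime below `m·n^{-1/2}`. -/
def BsubOf (n : ℕ) (ε : ℝ) (i : ℕ) (Bprev : Finset (Edge n)) (β : Edge n → ℝ) : Finset (Edge n) :=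
  (allEdges n \ Bprev).filter (fun f => β f < mc n ε i * (n : ℝ) ^ (-(1:ℝ)/2))

/-- `Λ^⋆₁`-type family: members of `Λ₁` contained in the selected edge set. -/
def LamS1 {n : ℕ} (TFi Bprev Bsel : Finset (Edge n)) (g : Edge n) : Finset (Edge n) :=
  (Lam1 TFi Bprev g).filter (fun e => e ∈ Bsel)

/-- `Λ^⋆₂`-type family: members of `Λ₂` contained in the selected edge set. -/
def LamS2 {n : ℕ} (TFi Bprev Bsel : Finset (Edge n)) (g : Edge n) : Finset (Finset (Edge n)) :=
  (Lam2 TFi Bprev g).filter (fun P => P ⊆ Bsel)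

/-- `Λ^{⋆⋆}₂`: members of `Λ₂` meeting the selected edge set in one edge. -/
def LamSS2 {n : ℕ} (TFi Bprev Bsel : Finset (Edge n)) (g : Edge n) : Finset (Finset (Edge n)) :=
  (Lam2 TFi Bprev g).filter (fun P => (P ∩ Bsel).card = 1)

/-- The event `E^⋆(h)`: properties P1–P4. -/
def Estar (n : ℕ) (ε : ℝ) (i : ℕ) (TFi Bprev Bstar : Finset (Edge n)) (h : ℝ) : Prop :=
  (∀ g ∈ allEdges n \ Bprev,
    within ((LamS1 TFi Bprev Bstar g).card : ℝ)
      (2 * Mc n ε * Phi (i * del n ε) * phi (i * del n ε))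
      (Gam n ε i + h * Gam n ε i * gam n ε i) ∧
    within ((LamS2 TFi Bprev Bstar g).card : ℝ)
      (Mc n ε ^ 2 * phi (i * del n ε) ^ 2)
      (Gam n ε i + h * Gam n ε i * gam n ε i) ∧
    within ((LamSS2 TFi Bprev Bstar g).card : ℝ)
      (2 * Mc n ε * Real.sqrt n * phi (i * del n ε) ^ 2)
      (Gam n ε i + h * Gam n ε i * gam n ε i)) ∧
  (∀ w x y : Fin n, w ≠ x → x ≠ y → w ≠ y →
    s(w, x) ∉ Bprev → s(x, y) ∉ Bprev →
    (((Finset.univ.filter (fun z : Fin n => z ≠ w ∧ z ≠ x ∧ z ≠ y ∧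
        s(w, z) ∈ TFi ∧ s(y, z) ∈ TFi ∧ s(x, z) ∈ Bstar)).card : ℝ) ≤ Real.log n ^ 2 ∧
     ((Finset.univ.filter (fun z : Fin n => z ≠ w ∧ z ≠ x ∧ z ≠ y ∧
        s(w, z) ∈ TFi ∧ s(x, z) ∈ Bstar ∧ s(y, z) ∈ Bstar)).card : ℝ) ≤ Real.log n ^ 2 ∧
     ((Finset.univ.filter (fun z : Fin n => z ≠ w ∧ z ≠ x ∧ z ≠ y ∧
        s(w, z) ∈ TFi ∧ s(x, z) ∉ Bprev ∧ s(y, z) ∈ Bstar)).card : ℝ) ≤ Mc n ε ^ 2)) ∧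
  (∀ x y : Fin n, x ≠ y →
    ((Finset.univ.filter (fun z : Fin n => z ≠ x ∧ z ≠ y ∧
        s(x, z) ∈ Bstar ∧ s(y, z) ∈ Bstar)).card : ℝ) ≤ 2 * Mc n ε ^ 2) ∧
  (∀ x : Fin n,
    ((Finset.univ.filter (fun y : Fin n => y ≠ x ∧ s(x, y) ∈ Bstar)).card : ℝ)
      ≤ 2 * Mc n ε * Real.sqrt n)

/-- The children (labeled by sets of edges) of a tree node labeled `g` whose
grandparent is labeled `prev`, in the tree built from the selected edge set
`Bsel` (`Bsel = B^⋆_{i+1}` gives `T^⋆`, `Bsel = B^*_{i+1}` gives `T^*`). -/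
def childSets {n : ℕ} (TFi Bprev Bsel : Finset (Edge n)) (g : Edge n) :
    Option (Edge n) → Finset (Finset (Edge n))
  | none => (LamS1 TFi Bprev Bsel g).image (fun e => {e}) ∪ LamS2 TFi Bprev Bsel g
  | some g' => ((LamS2 TFi Bprev Bsel g).filter (fun G => g' ∉ G)) ∪
      ((LamS1 TFi Bprev Bsel g).filter
        (fun e => e ≠ g' ∧ ¬ IsTri e g g')).image (fun e => {e})

/-- Survival of a tree node labeled `g` with grandparent label `prev`, when
the birthtime of the node's label is `b` and `l` further generations follow:
a non-leaf node survives iff for every child `G` all of whose edges have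
birthtime below `min{b, δn^{-1/2}}`, some child of `G` does not survive. -/
def surv (n : ℕ) (ε : ℝ) (TFi Bprev Bsel : Finset (Edge n)) (β : Edge n → ℝ) :
    ℕ → Edge n → Option (Edge n) → ℝ → Prop
  | 0, _, _, _ => True
  | l + 1, g, prev, b => ∀ G ∈ childSets TFi Bprev Bsel g prev,
      (∀ f ∈ G, β f < min b (del n ε * (n : ℝ) ^ (-(1:ℝ)/2))) →
      ∃ f ∈ G, ¬ surv n ε TFi Bprev Bsel β l f (some g) (β f)

/-- The event `A_{g,l}`: the root of `T_{g,l}` survives. -/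
def Aev (n : ℕ) (ε : ℝ) (TFi Bprev Bsel : Finset (Edge n)) (β : Edge n → ℝ)
    (l : ℕ) (g : Edge n) : Prop :=
  surv n ε TFi Bprev Bsel β l g none (β g)

/-- The event `A_{F,l} := ∩_{f ∈ F} A_{f,l}`. -/
def AevF (n : ℕ) (ε : ℝ) (TFi Bprev Bsel : Finset (Edge n)) (β : Edge n → ℝ)
    (l : ℕ) (F : Finset (Edge n)) : Prop :=
  ∀ f ∈ F, Aev n ε TFi Bprev Bsel β l f

/-- The conditional distribution of the birthtimes `β_{i+1}` given that
`B^⋆_{i+1} = Bstar` was chosen, that the edges of `F1` fall in `B_{i+1}`,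
and that the edges of `Fex` do not fall in `B_{i+1}`. -/
def condM (n : ℕ) (ε : ℝ) (Bprev Bstar F1 Fex : Finset (Edge n)) : Measure (Edge n → ℝ) :=
  Measure.pi fun e =>
    if e ∈ F1 then unif (Set.Ico 0 (del n ε * (n : ℝ) ^ (-(1:ℝ)/2)))
    else if e ∈ Fex then
      (if e ∈ Bstar then
          unif (Set.Ico (del n ε * (n : ℝ) ^ (-(1:ℝ)/2)) (Mc n ε * (n : ℝ) ^ (-(1:ℝ)/2)))
        else unif (Set.Ioc (Mc n ε * (n : ℝ) ^ (-(1:ℝ)/2)) 1))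
    else if e ∈ Bstar then unif (Set.Ico 0 (Mc n ε * (n : ℝ) ^ (-(1:ℝ)/2)))
    else if e ∈ Bprev then unif (Set.Icc 0 1)
    else unif (Set.Ioc (Mc n ε * (n : ℝ) ^ (-(1:ℝ)/2)) 1)

/-- As `condM`, but additionally given that `B^*_{i+1} = Bsub` was chosen. -/
def condM2 (n : ℕ) (ε : ℝ) (i : ℕ) (Bprev Bstar Bsub F1 Fex : Finset (Edge n)) :
    Measure (Edge n → ℝ) :=
  Measure.pi fun e =>
    if e ∈ F1 then unif (Set.Ico 0 (del n ε * (n : ℝ) ^ (-(1:ℝ)/2)))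
    else if e ∈ Fex then
      (if e ∈ Bsub then
          unif (Set.Ico (del n ε * (n : ℝ) ^ (-(1:ℝ)/2)) (mc n ε i * (n : ℝ) ^ (-(1:ℝ)/2)))
        else if e ∈ Bstar then
          unif (Set.Ico (mc n ε i * (n : ℝ) ^ (-(1:ℝ)/2)) (Mc n ε * (n : ℝ) ^ (-(1:ℝ)/2)))
        else unif (Set.Ioc (Mc n ε * (n : ℝ) ^ (-(1:ℝ)/2)) 1))
    else if e ∈ Bsub then unif (Set.Ico 0 (mc n ε i * (n : ℝ) ^ (-(1:ℝ)/2)))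
    else if e ∈ Bstar then
      unif (Set.Ico (mc n ε i * (n : ℝ) ^ (-(1:ℝ)/2)) (Mc n ε * (n : ℝ) ^ (-(1:ℝ)/2)))
    else if e ∈ Bprev then unif (Set.Icc 0 1)
    else unif (Set.Ioc (Mc n ε * (n : ℝ) ^ (-(1:ℝ)/2)) 1)

/-- A descending path of labels from a (root) node labeled `g` whose
grandparent label is `prev`: each step records the label of a set-node
together with the label of one of its edge-children. -/
def chain {n : ℕ} (TFi Bprev Bsel : Finset (Edge n)) :
    Edge n → Option (Edge n) → List (Finset (Edge n) × Edge n) → Prop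
  | _, _, [] => True
  | g, prev, (G, g') :: rest =>
      G ∈ childSets TFi Bprev Bsel g prev ∧ g' ∈ G ∧ chain TFi Bprev Bsel g' (some g) rest

/-- The (edge) label of the node-at-even-distance reached by a path. -/
def lbl {n : ℕ} (f : Edge n) (path : List (Finset (Edge n) × Edge n)) : Edge n :=
  (path.map Prod.snd).getLastD f

/-- The label of the grandparent of the node reached by a path. -/
def prevLbl {n : ℕ} (f : Edge n) (path : List (Finset (Edge n) × Edge n)) : Option (Edge n) :=
  if path.isEmpty then none else some (lbl f path.dropLast)

/-- The event `E^*_F`: an edge labeling a node at even distance from the root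
of a tree of `T^*_{F,L}` labels no other such node. -/
def EstarF (n : ℕ) (TFi Bprev Bsub : Finset (Edge n)) (L : ℕ) (F : Finset (Edge n)) : Prop :=
  ∀ f ∈ F, ∀ f' ∈ F, ∀ path path' : List (Finset (Edge n) × Edge n),
    chain TFi Bprev Bsub f none path → chain TFi Bprev Bsub f' none path' →
    path.length ≤ L → path'.length ≤ L →
    lbl f path = lbl f' path' → f = f' ∧ path = path'

/-- The event `E^*`. -/
def EstarSub (n : ℕ) (ε : ℝ) (i : ℕ) (TFi Bprev Bsub : Finset (Edge n)) : Prop :=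
  ∀ g ∈ allEdges n \ Bprev,
    within ((LamS1 TFi Bprev Bsub g).card : ℝ)
      (2 * mc n ε i * Phi (i * del n ε) * phi (i * del n ε)) (1.01 * Gam n ε i) ∧
    within ((LamS2 TFi Bprev Bsub g).card : ℝ)
      (mc n ε i ^ 2 * phi (i * del n ε) ^ 2) (1.01 * Gam n ε i)

/-- The iterates `p_l` of the limiting survival recursion (with `c1 = φ(iδ)`
and `c2 = Φ(iδ)`): `p₀ ≡ 1` and
`p_{l+1}(x) = exp(-P_l(x)²c₁² - 2P_l(x)c₂c₁)` where `P_l(x) := ∫₀ˣ p_l`. -/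
def plim (c1 c2 : ℝ) : ℕ → ℝ → ℝ
  | 0 => fun _ => 1
  | l + 1 => fun x =>
      Real.exp (-(∫ y in (0:ℝ)..x, plim c1 c2 l y) ^ 2 * c1 ^ 2 -
        2 * (∫ y in (0:ℝ)..x, plim c1 c2 l y) * c2 * c1)

/-- The staged triangle-free process: `stage i = (TF_i, B_{≤i})`. -/
def stage (n : ℕ) (ε : ℝ) (β : ℕ → Edge n → ℝ) : ℕ → Finset (Edge n) × Finset (Edge n)
  | 0 => (∅, ∅)
  | i + 1 =>
      let p := stage n ε β i
      (TFnext n ε p.1 p.2 (β (i + 1)), p.2 ∪ Bnext n ε p.2 (β (i + 1)))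

/-- The sample space for the stages `0,…,I` of the process: independent
uniform birthtimes in `[0,1]` for every stage and every edge. -/
def stagesMeasure (n : ℕ) (ε : ℝ) : Measure (Fin (Inat n ε + 1) → Edge n → ℝ) :=
  Measure.pi fun _ => stepMeasure n

/-- Extend a finitely-indexed family of birthtimes to all stages. -/
def extendB (n : ℕ) (ε : ℝ) (ω : Fin (Inat n ε + 1) → Edge n → ℝ) : ℕ → Edge n → ℝ :=
  fun k => if h : k < Inat n ε + 1 then ω ⟨k, h⟩ else fun _ => 0

/-- `TF_I` as a function of the birthtimes. -/
def TFI (n : ℕ) (ε : ℝ) (ω : Fin (Inat n ε + 1) → Edge n → ℝ) : Finset (Edge n) :=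
  (stage n ε (extendB n ε ω) (Inat n ε)).1

/-- The final graph `TF(n)` of the (one-shot) triangle-free process. -/
def TFone (n : ℕ) (β : Edge n → ℝ) : Finset (Edge n) :=
  greedy ∅ (sortByBirth β (allEdges n))

/-- `TF(n,p) := TF(n) ∩ {f : β(f) ≤ p}`. -/
def TFnp (n : ℕ) (β : Edge n → ℝ) (p : ℝ) : Finset (Edge n) :=
  (TFone n β).filter (fun f => β f ≤ p)

/-- `Fn` is a copy of the graph `F` inside `K_n`. -/
def IsCopy {V : Type*} (F : SimpleGraph V) {n : ℕ} (Fn : Finset (Edge n)) : Prop :=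
  ∃ φ : V → Fin n, Function.Injective φ ∧
    (∀ e, e ∈ Fn ↔ ∃ a b, F.Adj a b ∧ e = s(φ a, φ b))

/-- The number of copies of `F` in the graph on `Fin n` with edge set `T`
(= #{injective adjacency-preserving maps} / #{automorphisms of F}). -/
def numCopies {V : Type*} [Fintype V] (F : SimpleGraph V) {n : ℕ} (T : Finset (Edge n)) : ℝ :=
  (Nat.card {φ : V → Fin n // Function.Injective φ ∧
      ∀ a b, F.Adj a b → s(φ a, φ b) ∈ T} : ℝ) / (Nat.card (F ≃g F) : ℝ)

/-- The number of edges `e_F` of a graph `F`. -/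
def eCard {V : Type*} (F : SimpleGraph V) : ℕ := Nat.card F.edgeSet

/-- `F` is balanced: `e_F/v_F ≥ e_H/v_H` for every subgraph `H ⊆ F`
with at least one vertex. -/
def Balanced {V : Type*} [Fintype V] (F : SimpleGraph V) : Prop :=
  ∀ H : F.Subgraph, H.verts.Nonempty →
    (Nat.card H.edgeSet : ℝ) / (Nat.card H.verts : ℝ) ≤
      (eCard F : ℝ) / (Fintype.card V : ℝ)

end

end TF

namespace TF
noncomputable section
open scoped Classical

variable {n : ℕ}

namespace IsTri

variable {e f g : Edge n}

lemma ne₁₂ (h : IsTri e f g) : e ≠ f := by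
  obtain ⟨a, b, c, hab, hbc, hac, rfl, rfl, rfl⟩ := h
  grind [Sym2.eq_iff]

lemma ne₁₃ (h : IsTri e f g) : e ≠ g := by
  obtain ⟨a, b, c, hab, hbc, hac, rfl, rfl, rfl⟩ := h
  grind [Sym2.eq_iff]

lemma ne₂₃ (h : IsTri e f g) : f ≠ g := by
  obtain ⟨a, b, c, hab, hbc, hac, rfl, rfl, rfl⟩ := h
  grind [Sym2.eq_iff]

lemma swap₁₂ (h : IsTri e f g) : IsTri f e g := by
  obtain ⟨a, b, c, hab, hbc, hac, rfl, rfl, rfl⟩ := h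
  exact ⟨c, b, a, hbc.symm, hab.symm, hac.symm, Sym2.eq_swap, Sym2.eq_swap, Sym2.eq_swap⟩

lemma swap₂₃ (h : IsTri e f g) : IsTri e g f := by
  obtain ⟨a, b, c, hab, hbc, hac, rfl, rfl, rfl⟩ := h
  exact ⟨b, a, c, hab.symm, hac, hbc, Sym2.eq_swap, rfl, rfl⟩

lemma eq_of_isTri {g' : Edge n} (h : IsTri e f g) (h' : IsTri e f g') : g = g' := by
  obtain ⟨a, b, c, hab, hbc, hac, rfl, rfl, rfl⟩ := h
  obtain ⟨a', b', c', -, -, -, he, hf, rfl⟩ := h'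
  rw [Sym2.eq_iff] at he hf
  grind

end IsTri

lemma TriFree.anti {S T : Finset (Edge n)} (hST : S ⊆ T) (hT : TriFree T) : TriFree S :=
  fun e he f hf g hg => hT e (hST he) f (hST hf) g (hST hg)

lemma triFree_insert_iff {T : Finset (Edge n)} {e : Edge n} (hT : TriFree T) :
    TriFree (insert e T) ↔ AddOK T e := by
  refine ⟨fun h f hf g hg => h e (mem_insert_self e T) f (mem_insert_of_mem hf)
    g (mem_insert_of_mem hg), fun h x hx y hy z hz htri => ?_⟩
  rcases mem_insert.1 hx with hx | hx <;> rcases mem_insert.1 hy with hy | hy <;>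
    rcases mem_insert.1 hz with hz | hz
  · exact htri.ne₁₂ (hx.trans hy.symm)
  · exact htri.ne₁₂ (hx.trans hy.symm)
  · exact htri.ne₁₃ (hx.trans hz.symm)
  · exact h y hy z hz (hx ▸ htri)
  · exact htri.ne₂₃ (hy.trans hz.symm)
  · exact h x hx z hz (hy ▸ htri.swap₁₂)
  · exact h x hx y hy (hz ▸ htri.swap₂₃.swap₁₂)
  · exact hT x hx y hy z hz htri

section greedy

variable {T : Finset (Edge n)} {L : List (Edge n)}

lemma subset_greedy : T ⊆ greedy T L := by
  induction L generalizing T with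
  | nil => exact subset_rfl
  | cons e L ih =>
    rw [greedy]
    split_ifs
    exacts [(subset_insert e T).trans ih, ih]

lemma mem_greedy {e : Edge n} (he : e ∈ greedy T L) : e ∈ T ∨ e ∈ L := by
  induction L generalizing T with
  | nil => exact Or.inl he
  | cons e' L ih =>
    rw [greedy] at he
    split_ifs at he
    · rcases ih he with h | h
      · rcases mem_insert.1 h with rfl | h
        · exact Or.inr List.mem_cons_self
        · exact Or.inl h
      · exact Or.inr (List.mem_cons_of_mem e' h)
    · exact (ih he).imp_right (List.mem_cons_of_mem e')

lemma triFree_greedy (hT : TriFree T) : TriFree (greedy T L) := by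
  induction L generalizing T with
  | nil => exact hT
  | cons e L ih =>
    rw [greedy]
    split_ifs with h
    exacts [ih ((triFree_insert_iff hT).2 h.1), ih hT]

lemma mem_greedy_iff (β : Edge n → ℝ) (hL : L.Pairwise (β · < β ·))
    (hLT : ∀ e ∈ L, e ∉ T ∧ ¬ e.IsDiag) {f : Edge n} (hf : f ∈ L) :
    f ∈ greedy T L ↔ ∀ g₁ ∈ greedy T L, ∀ g₂ ∈ greedy T L,
      (g₁ ∈ T ∨ β g₁ < β f) → (g₂ ∈ T ∨ β g₂ < β f) → ¬ IsTri f g₁ g₂ := by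
  induction L generalizing T with
  | nil => simp at hf
  | cons e L ih =>
    obtain ⟨heL, hL⟩ := List.pairwise_cons.1 hL
    obtain ⟨heT, he⟩ := hLT e List.mem_cons_self
    have hLT' := fun x hx => hLT x (List.mem_cons_of_mem e hx)
    rw [greedy]
    split_ifs with hok
    · rcases List.mem_cons.1 hf with rfl | hf
      · have hold : ∀ x ∈ greedy (insert f T) L, (x ∈ T ∨ β x < β f) → x ∈ T := by
          rintro x hx (hxT | hxf)
          · exact hxT
          rcases mem_greedy hx with hx | hx
          · exact (mem_insert.1 hx).resolve_left (by rintro rfl; exact lt_irrefl _ hxf)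
          · exact absurd (heL x hx) hxf.asymm
        exact iff_of_true (subset_greedy (mem_insert_self f T)) fun g₁ hg₁ g₂ hg₂ h₁ h₂ =>
          hok.1 g₁ (hold g₁ hg₁ h₁) g₂ (hold g₂ hg₂ h₂)
      · have hLT'' : ∀ x ∈ L, x ∉ insert e T ∧ ¬ x.IsDiag := fun x hx =>
          ⟨by
            rw [mem_insert, not_or]
            exact ⟨fun h => (heL x hx).ne' (congrArg β h), (hLT' x hx).1⟩, (hLT' x hx).2⟩
        have hpresent : ∀ x, (x ∈ insert e T ∨ β x < β f) ↔ (x ∈ T ∨ β x < β f) := by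
          intro x
          rw [mem_insert]
          constructor
          · rintro ((hxe | hx) | hx)
            exacts [Or.inr (hxe ▸ heL f hf), Or.inl hx, Or.inr hx]
          · exact Or.imp_left Or.inr
        simpa only [hpresent] using ih hL hLT'' hf
    · have hok : ¬ AddOK T e := fun h => hok ⟨h, he⟩
      rcases List.mem_cons.1 hf with rfl | hf
      · refine iff_of_false (fun hmem => ?_) fun h => hok fun g₁ hg₁ g₂ hg₂ =>
          h g₁ (subset_greedy hg₁) g₂ (subset_greedy hg₂) (Or.inl hg₁) (Or.inl hg₂)
        rcases mem_greedy hmem with h | h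
        exacts [heT h, (lt_irrefl _ (heL f h))]
      · exact ih hL hLT' hf

end greedy

lemma sortByBirth_pairwise_lt {β : Edge n → ℝ} (hβ : Function.Injective β) (s : Finset (Edge n)) :
    (sortByBirth β s).Pairwise (β · < β ·) := by
  have hsorted := List.pairwise_mergeSort (le := fun a b : Edge n => decide (β a ≤ β b))
    (fun a b c hab hbc => by simp only [decide_eq_true_eq] at *; exact hab.trans hbc)
    (fun a b => by simpa only [Bool.or_eq_true, decide_eq_true_eq] using le_total (β a) (β b))
    s.toList
  have hnodup : (sortByBirth β s).Nodup := (List.mergeSort_perm _ _).nodup_iff.2 s.nodup_toList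
  exact (hsorted.and hnodup).imp fun ⟨hle, hne⟩ =>
    (of_decide_eq_true hle).lt_of_ne (hβ.ne hne)

lemma mem_sortByBirth {β : Edge n → ℝ} {s : Finset (Edge n)} {f : Edge n} :
    f ∈ sortByBirth β s ↔ f ∈ s :=
  (List.mergeSort_perm _ _).mem_iff.trans mem_toList

lemma del_le_Mc (n : ℕ) (ε : ℝ) : del n ε ≤ Mc n ε := by
  rcases Nat.eq_zero_or_pos ⌊(n : ℝ) ^ ε⌋₊ with h | h
  -- `⌊n^ε⌋ = 0` happens for `ε < 0`, and then `δ = 1/0 = 0` in Lean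
  · simp only [del, h, Nat.cast_zero, div_zero]
    exact Real.rpow_nonneg n.cast_nonneg _
  · have hpow : 1 ≤ (n : ℝ) ^ ε := Nat.one_le_floor_iff _ |>.1 h
    calc del n ε ≤ 1 := div_le_one_of_le₀ (by exact_mod_cast h) (Nat.cast_nonneg _)
      _ ≤ ((n : ℝ) ^ ε) ^ (20000 : ℝ) := Real.one_le_rpow hpow (by norm_num)
      _ = Mc n ε := by rw [Mc, ← Real.rpow_mul n.cast_nonneg, mul_comm]

section step

variable {ε : ℝ} {TFi Bprev : Finset (Edge n)} {β : Edge n → ℝ}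

lemma mem_Bnext_iff {f : Edge n} :
    f ∈ Bnext n ε Bprev β ↔ f ∈ allEdges n \ Bprev ∧ β f < del n ε * (n : ℝ) ^ (-(1:ℝ)/2) :=
  mem_filter

lemma Bnext_subset_BstarOf : Bnext n ε Bprev β ⊆ BstarOf n ε Bprev β :=
  monotone_filter_right _ fun _ _ hf => hf.trans_le <|
    mul_le_mul_of_nonneg_right (del_le_Mc n ε) (Real.rpow_nonneg n.cast_nonneg _)

lemma subset_TFnext : TFi ⊆ TFnext n ε TFi Bprev β := subset_greedy

lemma mem_TFnext {e : Edge n} (he : e ∈ TFnext n ε TFi Bprev β) :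
    e ∈ TFi ∨ e ∈ Bnext n ε Bprev β :=
  (mem_greedy he).imp_right mem_sortByBirth.1

lemma triFree_TFnext (hT : TriFree TFi) : TriFree (TFnext n ε TFi Bprev β) := triFree_greedy hT

variable (ε TFi Bprev β) in
def Blocked (f : Edge n) : Prop :=
  ∃ g₁ ∈ TFnext n ε TFi Bprev β, ∃ g₂ ∈ TFnext n ε TFi Bprev β,
    (g₁ ∈ TFi ∨ β g₁ < β f) ∧ (g₂ ∈ TFi ∨ β g₂ < β f) ∧ IsTri f g₁ g₂

lemma mem_TFnext_iff_not_blocked (hTB : TFi ⊆ Bprev) (hβ : Function.Injective β) {f : Edge n}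
    (hf : f ∈ Bnext n ε Bprev β) : f ∈ TFnext n ε TFi Bprev β ↔ ¬ Blocked ε TFi Bprev β f := by
  have hnew : ∀ e ∈ sortByBirth β (Bnext n ε Bprev β), e ∉ TFi ∧ ¬ e.IsDiag := by
    intro e he
    obtain ⟨heA, heB⟩ := mem_sdiff.1 (mem_Bnext_iff.1 (mem_sortByBirth.1 he)).1
    exact ⟨fun h => heB (hTB h), (mem_filter.1 heA).2⟩
  rw [TFnext, mem_greedy_iff β (sortByBirth_pairwise_lt hβ _) hnew (mem_sortByBirth.2 hf)]
  simp only [Blocked, TFnext, not_exists, not_and]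

lemma triFree_insert_TFnext_iff_not_blocked (hT : TriFree TFi) {f : Edge n}
    (hf : f ∈ allEdges n \ Bprev) (hfB : f ∉ Bnext n ε Bprev β) :
    TriFree (insert f (TFnext n ε TFi Bprev β)) ↔ ¬ Blocked ε TFi Bprev β f := by
  have hpresent : ∀ x ∈ TFnext n ε TFi Bprev β, x ∈ TFi ∨ β x < β f := fun x hx =>
    (mem_TFnext hx).imp_right fun hx =>
      (mem_Bnext_iff.1 hx).2.trans_le (not_lt.1 fun h => hfB (mem_Bnext_iff.2 ⟨hf, h⟩))
  rw [triFree_insert_iff (triFree_TFnext hT)]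
  simp only [AddOK, Blocked, not_exists, not_and]
  exact ⟨fun h g₁ hg₁ g₂ hg₂ _ _ => h g₁ hg₁ g₂ hg₂,
    fun h g₁ hg₁ g₂ hg₂ => h g₁ hg₁ g₂ hg₂ (hpresent g₁ hg₁) (hpresent g₂ hg₂)⟩

end step

section childSets

variable {TFi Bprev Bsel : Finset (Edge n)} {f : Edge n} {prev : Option (Edge n)}
  {G : Finset (Edge n)}

lemma singleton_or_mem_LamS2_of_mem_childSets (h : G ∈ childSets TFi Bprev Bsel f prev) :
    (∃ e ∈ LamS1 TFi Bprev Bsel f, G = {e}) ∨ G ∈ LamS2 TFi Bprev Bsel f := by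
  cases prev with
  | none =>
    rcases mem_union.1 h with h | h
    · obtain ⟨e, he, rfl⟩ := mem_image.1 h
      exact Or.inl ⟨e, he, rfl⟩
    · exact Or.inr h
  | some p =>
    rcases mem_union.1 h with h | h
    · exact Or.inr (mem_filter.1 h).1
    · obtain ⟨e, he, rfl⟩ := mem_image.1 h
      exact Or.inl ⟨e, (mem_filter.1 he).1, rfl⟩

lemma edges_of_mem_childSets (h : G ∈ childSets TFi Bprev Bsel f prev) :
    ∀ f' ∈ G, f' ∈ allEdges n \ Bprev ∧ TriFree (insert f' TFi) := by
  rcases singleton_or_mem_LamS2_of_mem_childSets h with ⟨e, he, rfl⟩ | hG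
  · simp only [mem_singleton, forall_eq]
    have he := (mem_filter.1 (mem_filter.1 he).1)
    exact ⟨he.1, he.2.2⟩
  · obtain ⟨hP, -, hfree⟩ := mem_filter.1 (mem_filter.1 hG).1
    exact fun f' hf' => ⟨(mem_powersetCard.1 hP).1 hf', hfree f' hf'⟩

lemma exists_isTri_of_mem_childSets (h : G ∈ childSets TFi Bprev Bsel f prev) :
    ∃ g₁ ∈ G, ∃ g₂, (g₂ ∈ G ∨ g₂ ∈ TFi) ∧ IsTri f g₁ g₂ := by
  rcases singleton_or_mem_LamS2_of_mem_childSets h with ⟨e, he, rfl⟩ | hG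
  · obtain ⟨g₂, hg₂, htri⟩ := (mem_filter.1 (mem_filter.1 he).1).2.1
    exact ⟨e, mem_singleton_self e, g₂, Or.inr hg₂, htri⟩
  · obtain ⟨g₁, hg₁, g₂, hg₂, -, htri⟩ := (mem_filter.1 (mem_filter.1 hG).1).2.1
    exact ⟨g₁, hg₁, g₂, Or.inl hg₂, htri⟩

lemma singleton_mem_childSets {e : Edge n} (he : e ∈ LamS1 TFi Bprev Bsel f)
    (hprev : ∀ p ∈ prev, e ≠ p ∧ ¬ IsTri e f p) : {e} ∈ childSets TFi Bprev Bsel f prev := by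
  cases prev with
  | none => exact mem_union.2 (Or.inl (mem_image_of_mem _ he))
  | some p => exact mem_union.2 (Or.inr (mem_image_of_mem _ (mem_filter.2 ⟨he, hprev p rfl⟩)))

lemma mem_childSets_of_mem_LamS2 (hG : G ∈ LamS2 TFi Bprev Bsel f) (hprev : ∀ p ∈ prev, p ∉ G) :
    G ∈ childSets TFi Bprev Bsel f prev := by
  cases prev with
  | none => exact mem_union.2 (Or.inr hG)
  | some p => exact mem_union.2 (Or.inl (mem_filter.2 ⟨hG, hprev p rfl⟩))

end childSets

section survival

variable {ε : ℝ} {TFi Bprev : Finset (Edge n)} {β : Edge n → ℝ} {f : Edge n}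
  {prev : Option (Edge n)}

lemma triFree_insert_of_mem_TFnext (hT : TriFree TFi) {a : Edge n}
    (ha : a ∈ TFnext n ε TFi Bprev β) : TriFree (insert a TFi) :=
  (triFree_TFnext hT).anti (insert_subset ha subset_TFnext)

lemma mem_LamS1_of_mem_TFnext (hT : TriFree TFi) {a b : Edge n}
    (ha : a ∈ TFnext n ε TFi Bprev β) (haT : a ∉ TFi) (hb : b ∈ TFi) (htri : IsTri f a b) :
    a ∈ LamS1 TFi Bprev (BstarOf n ε Bprev β) f := by
  have haB := (mem_TFnext ha).resolve_left haT
  exact mem_filter.2 ⟨mem_filter.2 ⟨(mem_Bnext_iff.1 haB).1, ⟨b, hb, htri⟩,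
    triFree_insert_of_mem_TFnext hT ha⟩, Bnext_subset_BstarOf haB⟩

lemma pair_mem_LamS2_of_mem_TFnext (hT : TriFree TFi) {g₁ g₂ : Edge n}
    (hg₁ : g₁ ∈ TFnext n ε TFi Bprev β) (h₁ : g₁ ∉ TFi)
    (hg₂ : g₂ ∈ TFnext n ε TFi Bprev β) (h₂ : g₂ ∉ TFi) (htri : IsTri f g₁ g₂) :
    {g₁, g₂} ∈ LamS2 TFi Bprev (BstarOf n ε Bprev β) f := by
  have hB₁ := (mem_TFnext hg₁).resolve_left h₁
  have hB₂ := (mem_TFnext hg₂).resolve_left h₂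
  refine mem_filter.2 ⟨mem_filter.2 ⟨mem_powersetCard.2 ⟨?_, card_pair htri.ne₂₃⟩,
    ⟨g₁, mem_insert_self _ _, g₂, mem_insert_of_mem (mem_singleton_self _), htri.ne₂₃, htri⟩,
    ?_⟩, ?_⟩
  · exact insert_subset (mem_Bnext_iff.1 hB₁).1 (singleton_subset_iff.2 (mem_Bnext_iff.1 hB₂).1)
  · simp only [mem_insert, mem_singleton, forall_eq_or_imp, forall_eq]
    exact ⟨triFree_insert_of_mem_TFnext hT hg₁, triFree_insert_of_mem_TFnext hT hg₂⟩
  · exact insert_subset (Bnext_subset_BstarOf hB₁)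
      (singleton_subset_iff.2 (Bnext_subset_BstarOf hB₂))

lemma exists_child_of_blocked (hTB : TFi ⊆ Bprev) (hT : TriFree TFi)
    (hTf : TriFree (insert f TFi)) (hprev : ∀ p ∈ prev, β f < β p ∧ p ∉ Bprev)
    (hB : Blocked ε TFi Bprev β f) : ∃ G ∈ childSets TFi Bprev (BstarOf n ε Bprev β) f prev,
      ∀ f' ∈ G, β f' < min (β f) (del n ε * (n : ℝ) ^ (-(1:ℝ)/2)) ∧
        f' ∈ TFnext n ε TFi Bprev β := by
  obtain ⟨g₁, hg₁, g₂, hg₂, c₁, c₂, htri⟩ := hB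
  have hearly : ∀ x ∈ TFnext n ε TFi Bprev β, x ∉ TFi → β x < β f →
      β x < min (β f) (del n ε * (n : ℝ) ^ (-(1:ℝ)/2)) := fun x hx hxT hxf =>
    lt_min hxf (mem_Bnext_iff.1 ((mem_TFnext hx).resolve_left hxT)).2
  have hsingle : ∀ a b, a ∈ TFnext n ε TFi Bprev β → a ∉ TFi → β a < β f → b ∈ TFi →
      IsTri f a b → ∃ G ∈ childSets TFi Bprev (BstarOf n ε Bprev β) f prev,
        ∀ f' ∈ G, β f' < min (β f) (del n ε * (n : ℝ) ^ (-(1:ℝ)/2)) ∧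
          f' ∈ TFnext n ε TFi Bprev β := by
    intro a b ha haT haf hb htri
    refine ⟨{a}, singleton_mem_childSets (mem_LamS1_of_mem_TFnext hT ha haT hb htri)
      fun p hp => ⟨?_, fun htri' => ?_⟩, ?_⟩
    · rintro rfl
      exact (haf.trans (hprev a hp).1).false
    -- the third edge of the triangle on `f` and `a` is `b ∈ TF_i`, but `p ∉ B_{≤i}`
    · exact (hprev p hp).2 (htri.eq_of_isTri htri'.swap₁₂ ▸ hTB hb)
    · simpa only [mem_singleton, forall_eq] using ⟨hearly a ha haT haf, ha⟩
  by_cases h₁ : g₁ ∈ TFi <;> by_cases h₂ : g₂ ∈ TFi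
  · exact absurd htri (hTf f (mem_insert_self f TFi) g₁ (mem_insert_of_mem h₁)
      g₂ (mem_insert_of_mem h₂))
  · exact hsingle g₂ g₁ hg₂ h₂ (c₂.resolve_left h₂) h₁ htri.swap₂₃
  · exact hsingle g₁ g₂ hg₁ h₁ (c₁.resolve_left h₁) h₂ htri
  · have hf₁ := c₁.resolve_left h₁
    have hf₂ := c₂.resolve_left h₂
    refine ⟨{g₁, g₂}, mem_childSets_of_mem_LamS2
      (pair_mem_LamS2_of_mem_TFnext hT hg₁ h₁ hg₂ h₂ htri) fun p hp => ?_, ?_⟩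
    · simp only [mem_insert, mem_singleton, not_or]
      exact ⟨fun h => (hf₁.trans (hprev p hp).1).ne' (congrArg β h),
        fun h => (hf₂.trans (hprev p hp).1).ne' (congrArg β h)⟩
    · simp only [mem_insert, mem_singleton, forall_eq_or_imp, forall_eq]
      exact ⟨⟨hearly g₁ hg₁ h₁ hf₁, hg₁⟩, ⟨hearly g₂ hg₂ h₂ hf₂, hg₂⟩⟩

lemma blocked_of_exists_child {G : Finset (Edge n)}
    (hG : G ∈ childSets TFi Bprev (BstarOf n ε Bprev β) f prev)
    (hGe : ∀ f' ∈ G, β f' < min (β f) (del n ε * (n : ℝ) ^ (-(1:ℝ)/2)) ∧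
      f' ∈ TFnext n ε TFi Bprev β) : Blocked ε TFi Bprev β f := by
  obtain ⟨g₁, hg₁, g₂, hg₂, htri⟩ := exists_isTri_of_mem_childSets hG
  have hpresent : ∀ x ∈ G, x ∈ TFi ∨ β x < β f := fun x hx =>
    Or.inr (lt_min_iff.1 (hGe x hx).1).1
  refine ⟨g₁, (hGe g₁ hg₁).2, g₂, ?_, hpresent g₁ hg₁, ?_, htri⟩
  · rcases hg₂ with hg₂ | hg₂
    exacts [(hGe g₂ hg₂).2, subset_TFnext hg₂]
  · rcases hg₂ with hg₂ | hg₂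
    exacts [hpresent g₂ hg₂, Or.inl hg₂]

lemma not_blocked_of_surv_succ (hTB : TFi ⊆ Bprev) (hT : TriFree TFi) (hβ : Function.Injective β)
    (hTf : TriFree (insert f TFi)) (hprev : ∀ p ∈ prev, β f < β p ∧ p ∉ Bprev) {l : ℕ}
    (hchild : ∀ G ∈ childSets TFi Bprev (BstarOf n ε Bprev β) f prev, ∀ f' ∈ G, β f' < β f →
      ¬ Blocked ε TFi Bprev β f' → surv n ε TFi Bprev (BstarOf n ε Bprev β) β l f' (some f) (β f'))
    (hs : surv n ε TFi Bprev (BstarOf n ε Bprev β) β (l + 1) f prev (β f)) :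
    ¬ Blocked ε TFi Bprev β f := fun hB => by
  obtain ⟨G, hG, hGe⟩ := exists_child_of_blocked hTB hT hTf hprev hB
  obtain ⟨f', hf', hns⟩ := hs G hG fun x hx => (hGe x hx).1
  obtain ⟨hf'f, hf'thr⟩ := lt_min_iff.1 (hGe f' hf').1
  have hf'B : f' ∈ Bnext n ε Bprev β :=
    mem_Bnext_iff.2 ⟨(edges_of_mem_childSets hG f' hf').1, hf'thr⟩
  exact hns (hchild G hG f' hf' hf'f ((mem_TFnext_iff_not_blocked hTB hβ hf'B).1 (hGe f' hf').2))

lemma surv_succ_of_not_blocked (hTB : TFi ⊆ Bprev) (hβ : Function.Injective β) {l : ℕ}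
    (hchild : ∀ G ∈ childSets TFi Bprev (BstarOf n ε Bprev β) f prev, ∀ f' ∈ G, β f' < β f →
      surv n ε TFi Bprev (BstarOf n ε Bprev β) β l f' (some f) (β f') → ¬ Blocked ε TFi Bprev β f')
    (hnb : ¬ Blocked ε TFi Bprev β f) :
    surv n ε TFi Bprev (BstarOf n ε Bprev β) β (l + 1) f prev (β f) := by
  intro G hG hGe
  by_contra! hall
  refine hnb (blocked_of_exists_child hG fun f' hf' => ⟨hGe f' hf', ?_⟩)
  obtain ⟨hf'f, hf'thr⟩ := lt_min_iff.1 (hGe f' hf')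
  have hf'B : f' ∈ Bnext n ε Bprev β :=
    mem_Bnext_iff.2 ⟨(edges_of_mem_childSets hG f' hf').1, hf'thr⟩
  exact (mem_TFnext_iff_not_blocked hTB hβ hf'B).2 (hchild G hG f' hf' hf'f (hall f' hf'))

lemma not_blocked_of_surv_of_odd_and_surv_of_not_blocked_of_even (hTB : TFi ⊆ Bprev)
    (hT : TriFree TFi) (hβ : Function.Injective β) (l : ℕ) :
    ∀ f prev, f ∉ Bprev → TriFree (insert f TFi) → (∀ p ∈ prev, β f < β p ∧ p ∉ Bprev) →
      (Odd l → surv n ε TFi Bprev (BstarOf n ε Bprev β) β l f prev (β f) →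
        ¬ Blocked ε TFi Bprev β f) ∧
      (Even l → ¬ Blocked ε TFi Bprev β f →
        surv n ε TFi Bprev (BstarOf n ε Bprev β) β l f prev (β f)) := by
  induction l with
  | zero => exact fun _ _ _ _ _ => ⟨fun h => absurd h Nat.not_odd_zero, fun _ _ => trivial⟩
  | succ l ih =>
    intro f prev hfB hTf hprev
    have ih' := fun G (hG : G ∈ childSets TFi Bprev (BstarOf n ε Bprev β) f prev) f' hf'
        (hf'f : β f' < β f) =>
      ih f' (some f) (mem_sdiff.1 (edges_of_mem_childSets hG f' hf').1).2
        (edges_of_mem_childSets hG f' hf').2 fun p hp => Option.some_inj.1 hp ▸ ⟨hf'f, hfB⟩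
    exact ⟨fun hodd => not_blocked_of_surv_succ hTB hT hβ hTf hprev fun G hG f' hf' hf'f =>
        (ih' G hG f' hf' hf'f).2 (Nat.not_odd_iff_even.1 (Nat.odd_add_one.1 hodd)),
      fun heven => surv_succ_of_not_blocked hTB hβ fun G hG f' hf' hf'f =>
        (ih' G hG f' hf' hf'f).1 (Nat.not_even_iff_odd.1 (Nat.even_add_one.1 heven))⟩

end survival

theorem survival_vs_process_general
    (ε : ℝ) (n : ℕ) (TFi Bprev : Finset (Edge n)) (hInst : Instance n TFi Bprev)
    (β : Edge n → ℝ) (hβ : Function.Injective β)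
    (g : Edge n) (hg : g ∈ allEdges n \ Bprev)
    (l : ℕ) (hlodd : Odd l)
    (hTg : TriFree (insert g TFi)) :
    (g ∈ Bnext n ε Bprev β →
      (Aev n ε TFi Bprev (BstarOf n ε Bprev β) β l g →
        g ∈ TFnext n ε TFi Bprev β) ∧
      (g ∈ TFnext n ε TFi Bprev β →
        Aev n ε TFi Bprev (BstarOf n ε Bprev β) β (l + 1) g)) ∧
    (g ∉ Bnext n ε Bprev β →
      (Aev n ε TFi Bprev (BstarOf n ε Bprev β) β l g →
        TriFree (insert g (TFnext n ε TFi Bprev β))) ∧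
      (TriFree (insert g (TFnext n ε TFi Bprev β)) →
        Aev n ε TFi Bprev (BstarOf n ε Bprev β) β (l + 1) g)) := by
  obtain ⟨hTB, -, hT⟩ := hInst
  have hroot := fun l => not_blocked_of_surv_of_odd_and_surv_of_not_blocked_of_even
    (ε := ε) hTB hT hβ l g none (mem_sdiff.1 hg).2 hTg (by simp)
  have hsandwich : ∀ {P : Prop}, (P ↔ ¬ Blocked ε TFi Bprev β g) →
      (Aev n ε TFi Bprev (BstarOf n ε Bprev β) β l g → P) ∧
        (P → Aev n ε TFi Bprev (BstarOf n ε Bprev β) β (l + 1) g) := fun hP =>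
    ⟨fun hA => hP.2 ((hroot l).1 hlodd hA), fun h => (hroot (l + 1)).2 hlodd.add_one (hP.1 h)⟩
  exact ⟨fun hgB => hsandwich (mem_TFnext_iff_not_blocked hTB hβ hgB),
    fun hgB => hsandwich (triFree_insert_TFnext_iff_not_blocked hT hg hgB)⟩

/-- Fix `0 ≤ i < I`, an edge `g ∉ B_{≤i}` and an odd
`l ≥ 1`. (a) On the event `{g ∈ B_{i+1}, TF_i ∪ {g}` triangle-free`}`:
`A_{g,l} ⟹ g ∈ TF_{i+1} ⟹ A_{g,l+1}`. (b) On the event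
`{g ∉ B_{≤i+1}, TF_i ∪ {g}` triangle-free`}`:
`A_{g,l} ⟹ TF_{i+1} ∪ {g}` triangle-free `⟹ A_{g,l+1}`. -/
theorem survival_vs_process
    (ε : ℝ) (hε0 : 0 < ε) (hε1 : ε < 1 / 10 ^ 10)
    (n : ℕ) (i : ℕ) (hi : i < Inat n ε)
    (TFi Bprev : Finset (Edge n))
    (hInst : Instance n TFi Bprev) (hWB : WellBehaved n ε i TFi Bprev)
    (β : Edge n → ℝ) (hβ : Function.Injective β)
    (g : Edge n) (hg : g ∈ allEdges n \ Bprev)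
    (l : ℕ) (hl1 : 1 ≤ l) (hlodd : Odd l)
    (hTg : TriFree (insert g TFi)) :
    (g ∈ Bnext n ε Bprev β →
      (Aev n ε TFi Bprev (BstarOf n ε Bprev β) β l g →
        g ∈ TFnext n ε TFi Bprev β) ∧
      (g ∈ TFnext n ε TFi Bprev β →
        Aev n ε TFi Bprev (BstarOf n ε Bprev β) β (l + 1) g)) ∧
    (g ∉ Bnext n ε Bprev β →
      (Aev n ε TFi Bprev (BstarOf n ε Bprev β) β l g →
        TriFree (insert g (TFnext n ε TFi Bprev β))) ∧
      (TriFree (insert g (TFnext n ε TFi Bprev β)) →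
        Aev n ε TFi Bprev (BstarOf n ε Bprev β) β (l + 1) g)) :=
  survival_vs_process_general ε n TFi Bprev hInst β hβ g hg l hlodd hTg

end
end TF
end

section
/- Fix s ≥ 0 and set Φ₀ := Φ(s) and φ₀ := φ(s) = exp(−Φ₀²). Let P : [0,∞) → ℝ be the solution of the initial value problem P(0) = 0, P'(x) = exp(−P(x)²·φ₀² − 2·P(x)·Φ₀·φ₀). Then for every x ≥ 0: (√π/2)·(erfi(Φ₀ + φ₀·P(x)) − erfi(Φ₀)) = x; consequently P(x) = (Φ(s+x) − Φ(s))/φ(s) and P'(x) = φ(s+x)/φ(s). -/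
open MeasureTheory Finset Filter

/-!
With `u := Φ₀ + φ₀ P` and `φ₀ = exp (-Φ₀²)`, the equation for `P` says exactly
`(√π/2 · erfi u)' = exp (u²) · φ₀ P' = 1`, so `√π/2 · (erfi u(x) - erfi Φ₀) = x`.
Since `Φ` inverts the strictly increasing bijection `√π/2 · erfi`, this means `u(x) = Φ(s + x)`.
-/

namespace TF

open Real Set

lemma hasDerivAt_erfi (y : ℝ) : HasDerivAt erfi (2 / √π * exp (y ^ 2)) y :=
  ((continuous_exp.comp (continuous_pow 2)).integral_hasStrictDerivAt 0 y).hasDerivAt.const_mul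
    (2 / √π)

lemma hasDerivAt_sqrt_pi_div_two_mul_erfi (y : ℝ) :
    HasDerivAt (fun y => √π / 2 * erfi y) (exp (y ^ 2)) y := by
  have hπ : √π ≠ 0 := (sqrt_pos.mpr pi_pos).ne'
  have hcoeff : √π / 2 * (2 / √π * exp (y ^ 2)) = exp (y ^ 2) := by field_simp
  simpa only [hcoeff] using (hasDerivAt_erfi y).const_mul (√π / 2)

lemma strictMono_sqrt_pi_div_two_mul_erfi : StrictMono fun y => √π / 2 * erfi y :=
  strictMono_of_deriv_pos fun y => by
    rw [(hasDerivAt_sqrt_pi_div_two_mul_erfi y).deriv]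
    positivity

lemma monotone_sqrt_pi_div_two_mul_erfi_sub_self : Monotone fun y => √π / 2 * erfi y - y := by
  have hderiv (y : ℝ) : HasDerivAt (fun y => √π / 2 * erfi y - y) (exp (y ^ 2) - 1) y :=
    (hasDerivAt_sqrt_pi_div_two_mul_erfi y).sub (hasDerivAt_id' y)
  refine monotone_of_deriv_nonneg (fun y => (hderiv y).differentiableAt) fun y => ?_
  rw [(hderiv y).deriv, sub_nonneg]
  exact one_le_exp (sq_nonneg y)

lemma surjective_sqrt_pi_div_two_mul_erfi : Function.Surjective fun y => √π / 2 * erfi y := by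
  have hcont : Continuous fun y => √π / 2 * erfi y :=
    continuous_iff_continuousAt.mpr fun y =>
      (hasDerivAt_sqrt_pi_div_two_mul_erfi y).continuousAt
  -- `√π/2 · erfi y - y` is monotone and vanishes at `0`, so `√π/2 · erfi` is squeezed past `id`.
  have herfi_zero : erfi 0 = 0 := by simp [erfi]
  refine hcont.surjective (tendsto_atTop_mono' atTop ?_ tendsto_id)
    (tendsto_atBot_mono' atBot ?_ tendsto_id)
  · filter_upwards [eventually_ge_atTop 0] with y hy
    simpa [herfi_zero] using monotone_sqrt_pi_div_two_mul_erfi_sub_self hy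
  · filter_upwards [eventually_le_atBot 0] with y hy
    simpa [herfi_zero] using monotone_sqrt_pi_div_two_mul_erfi_sub_self hy

lemma sqrt_pi_div_two_mul_erfi_Phi (x : ℝ) : √π / 2 * erfi (Phi x) = x :=
  Function.rightInverse_invFun surjective_sqrt_pi_div_two_mul_erfi x

lemma Phi_sqrt_pi_div_two_mul_erfi (y : ℝ) : Phi (√π / 2 * erfi y) = y :=
  Function.leftInverse_invFun strictMono_sqrt_pi_div_two_mul_erfi.injective y

lemma sqrt_pi_div_two_mul_erfi_sub_eq_of_hasDerivWithinAt (a : ℝ) {P : ℝ → ℝ}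
    (hP' : ∀ x ∈ Ici (0 : ℝ), HasDerivWithinAt P
      (exp (-(P x) ^ 2 * exp (-a ^ 2) ^ 2 - 2 * P x * a * exp (-a ^ 2))) (Ici 0) x)
    {x : ℝ} (hx : 0 ≤ x) :
    √π / 2 * (erfi (a + exp (-a ^ 2) * P x) - erfi (a + exp (-a ^ 2) * P 0)) = x := by
  set b := exp (-a ^ 2)
  set G : ℝ → ℝ := fun t => √π / 2 * erfi (a + b * P t) - t
  have hG : ∀ t ∈ Ici (0 : ℝ), HasDerivWithinAt G 0 (Ici 0) t := by
    intro t ht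
    have hchain := (hasDerivAt_sqrt_pi_div_two_mul_erfi (a + b * P t)).comp_hasDerivWithinAt t
      (((hP' t ht).const_mul b).const_add a)
    have hunit : exp ((a + b * P t) ^ 2) * (b * exp (-P t ^ 2 * b ^ 2 - 2 * P t * a * b)) = 1 := by
      rw [← exp_add, ← exp_add, exp_eq_one_iff]
      ring
    have hG := hchain.sub (hasDerivWithinAt_id t (Ici 0))
    rwa [hunit, sub_self] at hG
  have hconst := constant_of_has_deriv_right_zero (a := 0) (b := x)
    (fun t ht => (hG t ht.1).continuousWithinAt.mono Icc_subset_Ici_self)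
    (fun t ht => (hG t ht.1).mono (Ici_subset_Ici.mpr ht.1)) x ⟨hx, le_rfl⟩
  simp only [G, sub_zero] at hconst
  linarith [mul_sub (√π / 2) (erfi (a + b * P x)) (erfi (a + b * P 0))]

theorem ode_solution_general
    (s : ℝ) (P : ℝ → ℝ) (hP0 : P 0 = 0)
    (hP' : ∀ x ∈ Set.Ici (0 : ℝ),
      HasDerivWithinAt P
        (Real.exp (-(P x) ^ 2 * phi s ^ 2 - 2 * P x * Phi s * phi s))
        (Set.Ici (0 : ℝ)) x) :
    ∀ x : ℝ, 0 ≤ x →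
      (Real.sqrt Real.pi / 2) * (erfi (Phi s + phi s * P x) - erfi (Phi s)) = x ∧
      P x = (Phi (s + x) - Phi s) / phi s ∧
      Real.exp (-(P x) ^ 2 * phi s ^ 2 - 2 * P x * Phi s * phi s) =
        phi (s + x) / phi s := by
  intro x hx
  have herfi : √π / 2 * (erfi (Phi s + phi s * P x) - erfi (Phi s)) = x := by
    have := sqrt_pi_div_two_mul_erfi_sub_eq_of_hasDerivWithinAt (Phi s) hP' hx
    rwa [hP0, mul_zero, add_zero] at this
  have hPhi : Phi (s + x) = Phi s + phi s * P x := by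
    rw [mul_sub, sqrt_pi_div_two_mul_erfi_Phi] at herfi
    rw [← Phi_sqrt_pi_div_two_mul_erfi (Phi s + phi s * P x)]
    congr 1
    linarith
  refine ⟨herfi, ?_, ?_⟩
  · have hphi : phi s ≠ 0 := (exp_pos _).ne'
    rw [hPhi, add_sub_cancel_left, mul_div_cancel_left₀ _ hphi]
  · rw [phi.eq_1 (s + x), hPhi]
    simp only [phi, ← exp_sub]
    congr 1
    ring

/-- With `Φ₀ := Φ(s)` and `φ₀ := φ(s)`, the solution `P` of
`P(0) = 0`, `P'(x) = exp(-P(x)²φ₀² - 2P(x)Φ₀φ₀)` satisfies, for `x ≥ 0`,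
`(√π/2)(erfi(Φ₀ + φ₀P(x)) - erfi(Φ₀)) = x`, hence
`P(x) = (Φ(s+x) - Φ(s))/φ(s)` and `P'(x) = φ(s+x)/φ(s)`. -/
theorem ode_solution
    (s : ℝ) (hs : 0 ≤ s) (P : ℝ → ℝ) (hP0 : P 0 = 0)
    (hP' : ∀ x ∈ Set.Ici (0 : ℝ),
      HasDerivWithinAt P
        (Real.exp (-(P x) ^ 2 * phi s ^ 2 - 2 * P x * Phi s * phi s))
        (Set.Ici (0 : ℝ)) x) :
    ∀ x : ℝ, 0 ≤ x →
      (Real.sqrt Real.pi / 2) * (erfi (Phi s + phi s * P x) - erfi (Phi s)) = x ∧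
      P x = (Phi (s + x) - Phi s) / phi s ∧
      Real.exp (-(P x) ^ 2 * phi s ^ 2 - 2 * P x * Phi s * phi s) =
        phi (s + x) / phi s :=
  ode_solution_general s P hP0 hP'
end TF
end

section
/- Fix L ∈ {40,41}. For every sufficiently large n, every 0 ≤ i < I and every x ∈ [0,δ]: |p_L(x) − p(x)| ≤ n^{-36ε}; moreover p(x) → 1 uniformly in x ∈ [0,δ] and i as n → ∞, so that p_L(x) = p(x)·(1 ± h(n)·Γ(i)·γ(i)) for some function h(n) → 0. -/
open MeasureTheory Finset Filter

namespace TF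
noncomputable section
open scoped Classical

open Real Set intervalIntegral Topology

/-!
The iterates `p_l` are the Picard iterates, started at `p_0 ≡ 1`, of the map
`q ↦ exp (-Q²φ² - 2QΦφ)` with `Q(x) = ∫₀ˣ q`. As `exp` is `1`-Lipschitz on `(-∞, 0]` and
`Q ∈ [0, δ]`, this map contracts the sup norm on `[0, δ]` by `δ(2δφ² + 2Φφ) ≤ 3δ`, while
`|1 - p| ≤ δ²φ² + 2δΦφ ≤ 3γ(i)`. Hence `|p_L - p| ≤ (3δ)⁴⁰ · 3γ(i)`. Since `δ ≤ 2n^{-ε}` and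
`Γ(i) ≥ n^{-30ε}`, this is at most `n^{-36ε}` and at most `p · h(n) Γ(i) γ(i)` with
`h(n) ≍ n^{-10ε}`, and `|p - 1| ≤ 3γ(i) ≤ 3δ → 0`.
-/

lemma continuous_exp_sq : Continuous fun t : ℝ => exp (t ^ 2) := by fun_prop

lemma self_le_integral_exp_sq {y : ℝ} (hy : 0 ≤ y) : y ≤ ∫ t in (0:ℝ)..y, exp (t ^ 2) :=
  calc y = ∫ _ in (0:ℝ)..y, (1:ℝ) := by simp
    _ ≤ ∫ t in (0:ℝ)..y, exp (t ^ 2) :=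
      integral_mono_on hy intervalIntegrable_const (continuous_exp_sq.intervalIntegrable _ _)
        fun t _ => one_le_exp (sq_nonneg t)

lemma integral_exp_sq_le_self {y : ℝ} (hy : y ≤ 0) :
    ∫ t in (0:ℝ)..y, exp (t ^ 2) ≤ y := by
  have h : -y ≤ ∫ t in y..0, exp (t ^ 2) :=
    calc -y = ∫ _ in y..0, (1:ℝ) := by simp
      _ ≤ ∫ t in y..0, exp (t ^ 2) :=
        integral_mono_on hy intervalIntegrable_const
          (continuous_exp_sq.intervalIntegrable _ _)
          fun t _ => one_le_exp (sq_nonneg t)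
  rw [integral_symm]
  linarith

/-- `Phi` is a `Function.invFun`, hence a right inverse only because the primitive is onto. -/
lemma integral_exp_sq_Phi (x : ℝ) : ∫ t in (0:ℝ)..Phi x, exp (t ^ 2) = x := by
  have hcont : Continuous fun y : ℝ => ∫ t in (0:ℝ)..y, exp (t ^ 2) :=
    continuous_primitive continuous_exp_sq.intervalIntegrable 0
  have hsurj : Function.Surjective fun y : ℝ => ∫ t in (0:ℝ)..y, exp (t ^ 2) :=
    hcont.surjective
      (tendsto_atTop_mono' atTop
        ((eventually_ge_atTop 0).mono fun _ => self_le_integral_exp_sq) tendsto_id)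
      (tendsto_atBot_mono' atBot
        ((eventually_le_atBot 0).mono fun _ => integral_exp_sq_le_self) tendsto_id)
  have herfi : (fun y => √π / 2 * erfi y) = fun y : ℝ => ∫ t in (0:ℝ)..y, exp (t ^ 2) := by
    funext y
    have : √π ≠ 0 := (sqrt_pos.2 pi_pos).ne'
    rw [erfi]
    field_simp
  rw [Phi, herfi]
  exact Function.invFun_eq (hsurj x)

lemma Phi_nonneg {x : ℝ} (hx : 0 ≤ x) : 0 ≤ Phi x := by
  by_contra! h
  have := integral_exp_sq_le_self h.le
  rw [integral_exp_sq_Phi] at this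
  linarith

lemma phi_pos (x : ℝ) : 0 < phi x := exp_pos _

lemma phi_le_one (x : ℝ) : phi x ≤ 1 :=
  exp_le_one_iff.2 (by nlinarith [sq_nonneg (Phi x)])

lemma Phi_mul_phi_le_one (x : ℝ) : Phi x * phi x ≤ 1 := by
  simpa [mulExpNegSq_apply, phi, sq] using mulExpNegMulSq_one_le_one (Phi x)

lemma abs_exp_sub_exp_le_of_nonpos {a b : ℝ} (ha : a ≤ 0) (hb : b ≤ 0) :
    |exp a - exp b| ≤ |a - b| := by
  wlog hba : b ≤ a generalizing a b
  · rw [abs_sub_comm, abs_sub_comm a]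
    exact this hb ha (le_of_not_ge hba)
  have h1 : 1 - exp (b - a) ≤ a - b := by linarith [add_one_le_exp (b - a)]
  have h2 : 0 ≤ 1 - exp (b - a) := sub_nonneg.2 (exp_le_one_iff.2 (by linarith))
  rw [abs_of_nonneg (sub_nonneg.2 (exp_le_exp.2 hba)), abs_of_nonneg (sub_nonneg.2 hba)]
  calc exp a - exp b = exp a * (1 - exp (b - a)) := by rw [exp_sub]; field_simp
    _ ≤ 1 * (a - b) := mul_le_mul (exp_le_one_iff.2 ha) h1 h2 zero_le_one
    _ = a - b := one_mul _

lemma integral_le_self_of_le_one {f : ℝ → ℝ} {x : ℝ} (hx : 0 ≤ x)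
    (hf : IntervalIntegrable f volume 0 x) (h : ∀ y ∈ Icc 0 x, f y ≤ 1) :
    ∫ y in (0:ℝ)..x, f y ≤ x :=
  calc ∫ y in (0:ℝ)..x, f y ≤ ∫ _ in (0:ℝ)..x, (1:ℝ) :=
        integral_mono_on hx hf intervalIntegrable_const h
    _ = x := by simp

def survivalExp (a b t : ℝ) : ℝ := exp (-t ^ 2 * a ^ 2 - 2 * t * b * a)

section SurvivalRecursion

variable {a b d s t : ℝ}

lemma survivalExp_exponent_nonpos (ha : 0 ≤ a) (hb : 0 ≤ b) (ht : 0 ≤ t) :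
    -t ^ 2 * a ^ 2 - 2 * t * b * a ≤ 0 := by
  nlinarith [sq_nonneg (t * a), mul_nonneg (mul_nonneg ht hb) ha]

lemma survivalExp_le_one (ha : 0 ≤ a) (hb : 0 ≤ b) (ht : 0 ≤ t) : survivalExp a b t ≤ 1 :=
  exp_le_one_iff.2 (survivalExp_exponent_nonpos ha hb ht)

lemma one_sub_survivalExp_le (ha : 0 ≤ a) (hb : 0 ≤ b) (ht : t ∈ Icc 0 d) :
    1 - survivalExp a b t ≤ d ^ 2 * a ^ 2 + 2 * d * b * a := by
  have hexp := add_one_le_exp (-t ^ 2 * a ^ 2 - 2 * t * b * a)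
  have hsq : t ^ 2 * a ^ 2 ≤ d ^ 2 * a ^ 2 :=
    mul_le_mul_of_nonneg_right (pow_le_pow_left₀ ht.1 ht.2 2) (sq_nonneg a)
  have hlin : t * b * a ≤ d * b * a :=
    mul_le_mul_of_nonneg_right (mul_le_mul_of_nonneg_right ht.2 hb) ha
  rw [survivalExp]
  linarith

lemma abs_survivalExp_sub_le (ha : 0 ≤ a) (hb : 0 ≤ b) (hs : s ∈ Icc 0 d)
    (ht : t ∈ Icc 0 d) :
    |survivalExp a b s - survivalExp a b t| ≤ (2 * d * a ^ 2 + 2 * b * a) * |s - t| := by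
  have hfac : 0 ≤ (s + t) * a ^ 2 + 2 * b * a := by
    have := mul_nonneg hb ha
    nlinarith [mul_nonneg (add_nonneg hs.1 ht.1) (sq_nonneg a)]
  calc |survivalExp a b s - survivalExp a b t|
      ≤ |(-s ^ 2 * a ^ 2 - 2 * s * b * a) - (-t ^ 2 * a ^ 2 - 2 * t * b * a)| :=
        abs_exp_sub_exp_le_of_nonpos (survivalExp_exponent_nonpos ha hb hs.1)
          (survivalExp_exponent_nonpos ha hb ht.1)
    _ = ((s + t) * a ^ 2 + 2 * b * a) * |s - t| := by
        rw [show (-s ^ 2 * a ^ 2 - 2 * s * b * a) - (-t ^ 2 * a ^ 2 - 2 * t * b * a)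
            = ((s + t) * a ^ 2 + 2 * b * a) * (t - s) by ring,
          abs_mul, abs_of_nonneg hfac, abs_sub_comm]
    _ ≤ (2 * d * a ^ 2 + 2 * b * a) * |s - t| := by
        gcongr
        nlinarith [hs.2, ht.2]

lemma plim_succ (l : ℕ) (x : ℝ) :
    plim a b (l + 1) x = survivalExp a b (∫ y in (0:ℝ)..x, plim a b l y) := rfl

lemma continuous_plim : ∀ l, Continuous (plim a b l)
  | 0 => continuous_const
  | l + 1 => continuous_exp.comp (by
      have : Continuous fun x => ∫ y in (0:ℝ)..x, plim a b l y :=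
        continuous_primitive (fun _ _ => (continuous_plim l).intervalIntegrable _ _) 0
      fun_prop)

lemma plim_pos : ∀ l x, 0 < plim a b l x
  | 0, _ => one_pos
  | _ + 1, _ => exp_pos _

lemma plim_le_one (ha : 0 ≤ a) (hb : 0 ≤ b) : ∀ l, ∀ x, 0 ≤ x → plim a b l x ≤ 1
  | 0, _, _ => le_rfl
  | _ + 1, _, hx =>
    survivalExp_le_one ha hb (integral_nonneg hx fun y _ => (plim_pos _ y).le)

lemma integral_plim_mem_Icc (ha : 0 ≤ a) (hb : 0 ≤ b) (l : ℕ) {x : ℝ} (hx : 0 ≤ x) :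
    ∫ y in (0:ℝ)..x, plim a b l y ∈ Icc 0 x :=
  ⟨integral_nonneg hx fun y _ => (plim_pos l y).le,
    integral_le_self_of_le_one hx ((continuous_plim l).intervalIntegrable 0 x)
      fun y hy => plim_le_one ha hb l y hy.1⟩

end SurvivalRecursion

section FixedPoint

variable {a b d x : ℝ} {p : ℝ → ℝ}

lemma intervalIntegrable_of_continuousOn_Icc (hp : ContinuousOn p (Icc 0 d))
    (hx : x ∈ Icc 0 d) : IntervalIntegrable p volume 0 x :=
  (hp.mono (Icc_subset_Icc_right hx.2)).intervalIntegrable_of_Icc hx.1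

lemma integral_fixedPoint_nonneg
    (hfix : ∀ x ∈ Icc 0 d, p x = survivalExp a b (∫ y in (0:ℝ)..x, p y))
    (hx : x ∈ Icc 0 d) :
    0 ≤ ∫ y in (0:ℝ)..x, p y :=
  integral_nonneg hx.1 fun y hy => by
    rw [hfix y ⟨hy.1, hy.2.trans hx.2⟩]
    exact (exp_pos _).le

lemma fixedPoint_le_one (ha : 0 ≤ a) (hb : 0 ≤ b)
    (hfix : ∀ x ∈ Icc 0 d, p x = survivalExp a b (∫ y in (0:ℝ)..x, p y))
    (hx : x ∈ Icc 0 d) :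
    p x ≤ 1 := by
  rw [hfix x hx]
  exact survivalExp_le_one ha hb (integral_fixedPoint_nonneg hfix hx)

lemma integral_fixedPoint_mem_Icc (ha : 0 ≤ a) (hb : 0 ≤ b) (hp : ContinuousOn p (Icc 0 d))
    (hfix : ∀ x ∈ Icc 0 d, p x = survivalExp a b (∫ y in (0:ℝ)..x, p y))
    (hx : x ∈ Icc 0 d) :
    ∫ y in (0:ℝ)..x, p y ∈ Icc 0 x :=
  ⟨integral_fixedPoint_nonneg hfix hx,
    integral_le_self_of_le_one hx.1 (intervalIntegrable_of_continuousOn_Icc hp hx)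
      fun _ hy => fixedPoint_le_one ha hb hfix ⟨hy.1, hy.2.trans hx.2⟩⟩

theorem abs_plim_sub_fixedPoint_le (ha : 0 ≤ a) (hb : 0 ≤ b) (hp : ContinuousOn p (Icc 0 d))
    (hfix : ∀ x ∈ Icc 0 d, p x = survivalExp a b (∫ y in (0:ℝ)..x, p y))
    (l : ℕ) (hx : x ∈ Icc 0 d) :
    |plim a b l x - p x| ≤
      (d * (2 * d * a ^ 2 + 2 * b * a)) ^ l * (d ^ 2 * a ^ 2 + 2 * d * b * a) := by
  induction l generalizing x with
  | zero =>
    change |1 - p x| ≤ _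
    rw [pow_zero, one_mul, abs_sub_comm,
      abs_of_nonpos (sub_nonpos.2 (fixedPoint_le_one ha hb hfix hx)), neg_sub, hfix x hx]
    exact one_sub_survivalExp_le ha hb
      (Icc_subset_Icc_right hx.2 (integral_fixedPoint_mem_Icc ha hb hp hfix hx))
  | succ l ih =>
    set B := (d * (2 * d * a ^ 2 + 2 * b * a)) ^ l * (d ^ 2 * a ^ 2 + 2 * d * b * a)
    have hdiff : |(∫ y in (0:ℝ)..x, plim a b l y) - ∫ y in (0:ℝ)..x, p y| ≤ B * d := by
      rw [← integral_sub ((continuous_plim l).intervalIntegrable 0 x)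
        (intervalIntegrable_of_continuousOn_Icc hp hx), ← Real.norm_eq_abs]
      calc _ ≤ B * |x - 0| := norm_integral_le_of_norm_le_const fun y hy => by
              rw [uIoc_of_le hx.1] at hy
              exact ih ⟨hy.1.le, hy.2.trans hx.2⟩
        _ ≤ B * d := by
              rw [sub_zero, abs_of_nonneg hx.1]
              exact mul_le_mul_of_nonneg_left hx.2 ((abs_nonneg _).trans (ih hx))
    have hd : 0 ≤ d := hx.1.trans hx.2
    calc |plim a b (l + 1) x - p x|
        = |survivalExp a b (∫ y in (0:ℝ)..x, plim a b l y) -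
            survivalExp a b (∫ y in (0:ℝ)..x, p y)| := by rw [plim_succ, hfix x hx]
      _ ≤ (2 * d * a ^ 2 + 2 * b * a) * (B * d) := by
          refine (abs_survivalExp_sub_le ha hb ?_ ?_).trans (by gcongr)
          · exact Icc_subset_Icc_right hx.2 (integral_plim_mem_Icc ha hb l hx.1)
          · exact Icc_subset_Icc_right hx.2 (integral_fixedPoint_mem_Icc ha hb hp hfix hx)
      _ = (d * (2 * d * a ^ 2 + 2 * b * a)) ^ (l + 1) * (d ^ 2 * a ^ 2 + 2 * d * b * a) := by
          ring

end FixedPoint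

lemma rpow_neg_mul_natCast {x : ℝ} (hx : 0 ≤ x) (ε : ℝ) (k : ℕ) :
    x ^ (-(k : ℝ) * ε) = (x ^ (-ε)) ^ k := by
  rw [← rpow_natCast, ← rpow_mul hx]
  ring_nf

lemma within_of_abs_sub_le {y a b : ℝ} (h : |y - a| ≤ a * b) : within y a b := by
  rw [abs_le] at h
  constructor <;> linarith [h.1, h.2]

section Parameters

variable {n : ℕ} {ε : ℝ} {i : ℕ}

lemma del_nonneg : 0 ≤ del n ε := by
  unfold del
  positivity

lemma Phi_natCast_mul_del_nonneg : 0 ≤ Phi (i * del n ε) :=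
  Phi_nonneg (mul_nonneg i.cast_nonneg del_nonneg)

lemma gam_nonneg : 0 ≤ gam n ε i :=
  le_trans (by positivity) (le_max_right _ _)

lemma gam_le_del (h : del n ε ≤ 1) : gam n ε i ≤ del n ε := by
  have hδ : 0 ≤ del n ε := del_nonneg
  apply max_le
  · calc del n ε * Phi (i * del n ε) * phi (i * del n ε)
        = del n ε * (Phi (i * del n ε) * phi (i * del n ε)) := mul_assoc _ _ _
      _ ≤ del n ε * 1 := mul_le_mul_of_nonneg_left (Phi_mul_phi_le_one _) hδ
      _ = del n ε := mul_one _
  · rw [← mul_pow]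
    calc (del n ε * phi (i * del n ε)) ^ 2 ≤ del n ε ^ 2 := by
          gcongr
          · exact mul_nonneg hδ (phi_pos _).le
          · exact mul_le_of_le_one_right hδ (phi_le_one _)
      _ ≤ del n ε := by nlinarith

lemma rpow_le_Gam : (n : ℝ) ^ (-30 * ε) ≤ Gam n ε i := by
  induction i with
  | zero => exact le_rfl
  | succ i ih =>
    calc (n : ℝ) ^ (-30 * ε) ≤ Gam n ε i := ih
      _ ≤ Gam n ε i * (1 + 10 * gam n ε i) :=
          le_mul_of_one_le_right ((by positivity : (0:ℝ) ≤ _).trans ih)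
            (by linarith [gam_nonneg (n := n) (ε := ε) (i := i)])

lemma sq_add_two_mul_le_three_mul_gam :
    del n ε ^ 2 * phi (i * del n ε) ^ 2 + 2 * del n ε * Phi (i * del n ε) * phi (i * del n ε)
      ≤ 3 * gam n ε i := by
  have h1 := le_max_left (del n ε * Phi (i * del n ε) * phi (i * del n ε))
    (del n ε ^ 2 * phi (i * del n ε) ^ 2)
  have h2 := le_max_right (del n ε * Phi (i * del n ε) * phi (i * del n ε))
    (del n ε ^ 2 * phi (i * del n ε) ^ 2)
  rw [gam]
  linarith

variable {p : ℝ → ℝ} {x : ℝ}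

lemma abs_fixedPoint_sub_one_le (hp : ContinuousOn p (Icc 0 (del n ε)))
    (hfix : ∀ x ∈ Icc 0 (del n ε),
      p x = survivalExp (phi (i * del n ε)) (Phi (i * del n ε)) (∫ y in (0:ℝ)..x, p y))
    (hx : x ∈ Icc 0 (del n ε)) :
    |p x - 1| ≤ 3 * gam n ε i := by
  have h := abs_plim_sub_fixedPoint_le (phi_pos _).le Phi_natCast_mul_del_nonneg hp hfix 0 hx
  rw [pow_zero, one_mul, abs_sub_comm] at h
  exact h.trans sq_add_two_mul_le_three_mul_gam

lemma abs_plim_sub_fixedPoint_le_gam {L : ℕ} (hL : 40 ≤ L) (hδ : del n ε ≤ 1 / 3)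
    (hp : ContinuousOn p (Icc 0 (del n ε)))
    (hfix : ∀ x ∈ Icc 0 (del n ε),
      p x = survivalExp (phi (i * del n ε)) (Phi (i * del n ε)) (∫ y in (0:ℝ)..x, p y))
    (hx : x ∈ Icc 0 (del n ε)) :
    |plim (phi (i * del n ε)) (Phi (i * del n ε)) L x - p x| ≤
      (3 * del n ε) ^ 40 * (3 * gam n ε i) := by
  set a := phi (i * del n ε)
  set b := Phi (i * del n ε)
  set d := del n ε
  have hd : 0 ≤ d := del_nonneg
  have ha : a ^ 2 ≤ 1 := pow_le_one₀ (phi_pos _).le (phi_le_one _)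
  have hba : 0 ≤ b * a := mul_nonneg Phi_natCast_mul_del_nonneg (phi_pos _).le
  have hK0 : 0 ≤ d * (2 * d * a ^ 2 + 2 * b * a) :=
    mul_nonneg hd (by nlinarith [sq_nonneg a])
  have hD0 : 0 ≤ d ^ 2 * a ^ 2 + 2 * d * b * a := by nlinarith [sq_nonneg (d * a)]
  have hK : d * (2 * d * a ^ 2 + 2 * b * a) ≤ 3 * d := by
    have : 2 * d * a ^ 2 + 2 * (b * a) ≤ 3 := by
      nlinarith [Phi_mul_phi_le_one (i * del n ε)]
    nlinarith
  calc |plim a b L x - p x|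
      ≤ (d * (2 * d * a ^ 2 + 2 * b * a)) ^ L * (d ^ 2 * a ^ 2 + 2 * d * b * a) :=
        abs_plim_sub_fixedPoint_le (phi_pos _).le Phi_natCast_mul_del_nonneg hp hfix L hx
    _ ≤ (d * (2 * d * a ^ 2 + 2 * b * a)) ^ 40 * (3 * gam n ε i) :=
        mul_le_mul (pow_le_pow_of_le_one hK0 (by linarith) hL) sq_add_two_mul_le_three_mul_gam hD0
          (pow_nonneg hK0 _)
    _ ≤ (3 * d) ^ 40 * (3 * gam n ε i) := by
        gcongr
        exact mul_nonneg (by norm_num) gam_nonneg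

lemma abs_plim_sub_fixedPoint_le_rpow {L : ℕ} (hL : 40 ≤ L) (hδ : del n ε ≤ 1 / 3)
    (hδu : del n ε ≤ 2 * (n : ℝ) ^ (-ε)) (hu : 6 ^ 41 * ((n : ℝ) ^ (-ε)) ^ 5 ≤ 1)
    (hp : ContinuousOn p (Icc 0 (del n ε)))
    (hfix : ∀ x ∈ Icc 0 (del n ε),
      p x = survivalExp (phi (i * del n ε)) (Phi (i * del n ε)) (∫ y in (0:ℝ)..x, p y))
    (hx : x ∈ Icc 0 (del n ε)) :
    |plim (phi (i * del n ε)) (Phi (i * del n ε)) L x - p x| ≤ (n : ℝ) ^ (-36 * ε) := by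
  set u := (n : ℝ) ^ (-ε)
  have h36 : (n : ℝ) ^ (-36 * ε) = u ^ 36 := by
    simpa using rpow_neg_mul_natCast (Nat.cast_nonneg n) ε 36
  calc |plim (phi (i * del n ε)) (Phi (i * del n ε)) L x - p x|
      ≤ (3 * del n ε) ^ 40 * (3 * gam n ε i) := abs_plim_sub_fixedPoint_le_gam hL hδ hp hfix hx
    _ ≤ (3 * del n ε) ^ 40 * (3 * del n ε) :=
        mul_le_mul_of_nonneg_left
          (by linarith [gam_le_del (n := n) (ε := ε) (i := i) (by linarith)])
          (pow_nonneg (mul_nonneg (by norm_num) del_nonneg) _)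
    _ ≤ (6 * u) ^ 40 * (6 * u) := by
        have := mul_nonneg (by norm_num : (0:ℝ) ≤ 3) (del_nonneg (n := n) (ε := ε))
        gcongr ?_ ^ 40 * ?_ <;> linarith
    _ = (6 ^ 41 * u ^ 5) * u ^ 36 := by ring
    _ ≤ u ^ 36 := mul_le_of_le_one_left (by positivity) hu
    _ = (n : ℝ) ^ (-36 * ε) := h36.symm

lemma within_plim_fixedPoint {L : ℕ} (hL : 40 ≤ L) (hδ : del n ε ≤ 1 / 6)
    (hδu : del n ε ≤ 2 * (n : ℝ) ^ (-ε))
    (hp : ContinuousOn p (Icc 0 (del n ε)))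
    (hfix : ∀ x ∈ Icc 0 (del n ε),
      p x = survivalExp (phi (i * del n ε)) (Phi (i * del n ε)) (∫ y in (0:ℝ)..x, p y))
    (hx : x ∈ Icc 0 (del n ε)) :
    within (plim (phi (i * del n ε)) (Phi (i * del n ε)) L x) (p x)
      (6 ^ 41 * ((n : ℝ) ^ (-ε)) ^ 10 * Gam n ε i * gam n ε i) := by
  set u := (n : ℝ) ^ (-ε)
  have hγ := gam_le_del (n := n) (ε := ε) (i := i) (by linarith)
  have hγ0 : 0 ≤ gam n ε i := gam_nonneg
  have hpx : 1 / 2 ≤ p x := by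
    have := abs_le.1 (abs_fixedPoint_sub_one_le hp hfix hx)
    linarith
  have hΓ : u ^ 30 ≤ Gam n ε i := by
    have h30 : (n : ℝ) ^ (-30 * ε) = u ^ 30 := by
      simpa using rpow_neg_mul_natCast (Nat.cast_nonneg n) ε 30
    exact h30 ▸ rpow_le_Gam
  have hΓ0 : 0 ≤ Gam n ε i := (by positivity : (0:ℝ) ≤ u ^ 30).trans hΓ
  apply within_of_abs_sub_le
  calc |plim (phi (i * del n ε)) (Phi (i * del n ε)) L x - p x|
      ≤ (3 * del n ε) ^ 40 * (3 * gam n ε i) :=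
        abs_plim_sub_fixedPoint_le_gam hL (by linarith) hp hfix hx
    _ ≤ (6 * u) ^ 40 * (3 * gam n ε i) := by
        have := mul_nonneg (by norm_num : (0:ℝ) ≤ 3) (del_nonneg (n := n) (ε := ε))
        gcongr ?_ ^ 40 * _
        linarith
    _ = (1 / 2 * 6) * (6 ^ 40 * u ^ 10 * (u ^ 30 * gam n ε i)) := by ring
    _ ≤ p x * 6 * (6 ^ 40 * u ^ 10 * (Gam n ε i * gam n ε i)) := by gcongr
    _ = p x * (6 ^ 41 * u ^ 10 * Gam n ε i * gam n ε i) := by ring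

end Parameters

lemma eventually_del_le_two_mul_rpow_neg {ε : ℝ} (hε : 0 < ε) :
    ∀ᶠ n : ℕ in atTop, del n ε ≤ 2 * (n : ℝ) ^ (-ε) := by
  filter_upwards [((tendsto_rpow_atTop hε).comp tendsto_natCast_atTop_atTop).eventually_ge_atTop 2]
    with n (hn : 2 ≤ (n : ℝ) ^ ε)
  have hfloor : (n : ℝ) ^ ε / 2 ≤ ⌊(n : ℝ) ^ ε⌋₊ := by
    linarith [Nat.sub_one_lt_floor ((n : ℝ) ^ ε)]
  have hpos : 0 < (n : ℝ) ^ ε := by linarith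
  rw [del, rpow_neg (Nat.cast_nonneg n)]
  calc 1 / (⌊(n : ℝ) ^ ε⌋₊ : ℝ) ≤ 1 / ((n : ℝ) ^ ε / 2) :=
        one_div_le_one_div_of_le (by positivity) hfloor
    _ = 2 * ((n : ℝ) ^ ε)⁻¹ := by field_simp

theorem pL_close_to_fixed_point_general
    (ε : ℝ) (hε0 : 0 < ε)
    (L : ℕ) (hL : L = 40 ∨ L = 41) :
    (∃ N : ℕ, ∀ n ≥ N, ∀ i < Inat n ε, ∀ p : ℝ → ℝ,
      ContinuousOn p (Set.Icc 0 (del n ε)) →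
      (∀ x ∈ Set.Icc (0 : ℝ) (del n ε),
        p x = Real.exp (-(∫ y in (0:ℝ)..x, p y) ^ 2 * phi (i * del n ε) ^ 2 -
          2 * (∫ y in (0:ℝ)..x, p y) * Phi (i * del n ε) * phi (i * del n ε))) →
      ∀ x ∈ Set.Icc (0 : ℝ) (del n ε),
        |plim (phi (i * del n ε)) (Phi (i * del n ε)) L x - p x| ≤ (n : ℝ) ^ (-36 * ε)) ∧
    (∀ ξ : ℝ, 0 < ξ → ∃ N : ℕ, ∀ n ≥ N, ∀ i < Inat n ε, ∀ p : ℝ → ℝ,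
      ContinuousOn p (Set.Icc 0 (del n ε)) →
      (∀ x ∈ Set.Icc (0 : ℝ) (del n ε),
        p x = Real.exp (-(∫ y in (0:ℝ)..x, p y) ^ 2 * phi (i * del n ε) ^ 2 -
          2 * (∫ y in (0:ℝ)..x, p y) * Phi (i * del n ε) * phi (i * del n ε))) →
      ∀ x ∈ Set.Icc (0 : ℝ) (del n ε), |p x - 1| ≤ ξ) ∧
    (∃ h : ℕ → ℝ, Tendsto h atTop (nhds 0) ∧
      ∃ N : ℕ, ∀ n ≥ N, ∀ i < Inat n ε, ∀ p : ℝ → ℝ,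
        ContinuousOn p (Set.Icc 0 (del n ε)) →
        (∀ x ∈ Set.Icc (0 : ℝ) (del n ε),
          p x = Real.exp (-(∫ y in (0:ℝ)..x, p y) ^ 2 * phi (i * del n ε) ^ 2 -
            2 * (∫ y in (0:ℝ)..x, p y) * Phi (i * del n ε) * phi (i * del n ε))) →
        ∀ x ∈ Set.Icc (0 : ℝ) (del n ε),
          within (plim (phi (i * del n ε)) (Phi (i * del n ε)) L x) (p x)
            (h n * Gam n ε i * gam n ε i)) := by
  have hL40 : 40 ≤ L := by omega
  have hu : Tendsto (fun n : ℕ => (n : ℝ) ^ (-ε)) atTop (𝓝 0) :=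
    (tendsto_rpow_neg_atTop hε0).comp tendsto_natCast_atTop_atTop
  have hsmall : ∀ᶠ n : ℕ in atTop,
      del n ε ≤ 2 * (n : ℝ) ^ (-ε) ∧ (n : ℝ) ^ (-ε) ≤ 1 / 12 ∧ 6 ^ 41 * ((n : ℝ) ^ (-ε)) ^ 5 ≤ 1 :=
    (eventually_del_le_two_mul_rpow_neg hε0).and ((hu.eventually_le_const (by norm_num)).and
      (((hu.pow 5).const_mul _).eventually_le_const (by norm_num)))
  obtain ⟨N, hN⟩ := eventually_atTop.1 hsmall
  refine ⟨⟨N, fun n hn i _ p hp hfix x hx => ?_⟩, fun ξ hξ => ?_,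
    fun n => 6 ^ 41 * ((n : ℝ) ^ (-ε)) ^ 10, by simpa using (hu.pow 10).const_mul (6 ^ 41 : ℝ),
    N, fun n hn i _ p hp hfix x hx => ?_⟩
  · obtain ⟨hδ, hu12, hu5⟩ := hN n hn
    exact abs_plim_sub_fixedPoint_le_rpow hL40 (by linarith) hδ hu5 hp hfix hx
  · obtain ⟨N', hN'⟩ := eventually_atTop.1
      (hsmall.and (hu.eventually_le_const (show (0 : ℝ) < ξ / 6 by positivity)))
    refine ⟨N', fun n hn i _ p hp hfix x hx => ?_⟩
    obtain ⟨⟨hδ, hu12, -⟩, huξ⟩ := hN' n hn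
    calc |p x - 1| ≤ 3 * gam n ε i := abs_fixedPoint_sub_one_le hp hfix hx
      _ ≤ ξ := by linarith [gam_le_del (n := n) (ε := ε) (i := i) (by linarith)]
  · obtain ⟨hδ, hu12, -⟩ := hN n hn
    exact within_plim_fixedPoint hL40 (by linarith) hδ hp hfix hx

/-- For `L ∈ {40,41}`, sufficiently large `n`, `0 ≤ i < I`
and `x ∈ [0,δ]`: `|p_L(x) - p(x)| ≤ n^{-36ε}` where `p` is the fixed point of
the survival recursion; moreover `p → 1` uniformly, so
`p_L(x) = p(x)(1 ± h(n)Γ(i)γ(i))` for some `h(n) → 0`. -/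
theorem pL_close_to_fixed_point
    (ε : ℝ) (hε0 : 0 < ε) (hε1 : ε < 1 / 10 ^ 10)
    (L : ℕ) (hL : L = 40 ∨ L = 41) :
    (∃ N : ℕ, ∀ n ≥ N, ∀ i < Inat n ε, ∀ p : ℝ → ℝ,
      ContinuousOn p (Set.Icc 0 (del n ε)) →
      (∀ x ∈ Set.Icc (0 : ℝ) (del n ε),
        p x = Real.exp (-(∫ y in (0:ℝ)..x, p y) ^ 2 * phi (i * del n ε) ^ 2 -
          2 * (∫ y in (0:ℝ)..x, p y) * Phi (i * del n ε) * phi (i * del n ε))) →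
      ∀ x ∈ Set.Icc (0 : ℝ) (del n ε),
        |plim (phi (i * del n ε)) (Phi (i * del n ε)) L x - p x| ≤ (n : ℝ) ^ (-36 * ε)) ∧
    (∀ ξ : ℝ, 0 < ξ → ∃ N : ℕ, ∀ n ≥ N, ∀ i < Inat n ε, ∀ p : ℝ → ℝ,
      ContinuousOn p (Set.Icc 0 (del n ε)) →
      (∀ x ∈ Set.Icc (0 : ℝ) (del n ε),
        p x = Real.exp (-(∫ y in (0:ℝ)..x, p y) ^ 2 * phi (i * del n ε) ^ 2 -
          2 * (∫ y in (0:ℝ)..x, p y) * Phi (i * del n ε) * phi (i * del n ε))) →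
      ∀ x ∈ Set.Icc (0 : ℝ) (del n ε), |p x - 1| ≤ ξ) ∧
    (∃ h : ℕ → ℝ, Tendsto h atTop (nhds 0) ∧
      ∃ N : ℕ, ∀ n ≥ N, ∀ i < Inat n ε, ∀ p : ℝ → ℝ,
        ContinuousOn p (Set.Icc 0 (del n ε)) →
        (∀ x ∈ Set.Icc (0 : ℝ) (del n ε),
          p x = Real.exp (-(∫ y in (0:ℝ)..x, p y) ^ 2 * phi (i * del n ε) ^ 2 -
            2 * (∫ y in (0:ℝ)..x, p y) * Phi (i * del n ε) * phi (i * del n ε))) →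
        ∀ x ∈ Set.Icc (0 : ℝ) (del n ε),
          within (plim (phi (i * del n ε)) (Phi (i * del n ε)) L x) (p x)
            (h n * Gam n ε i * gam n ε i)) :=
  pL_close_to_fixed_point_general ε hε0 L hL

end
end TF
end
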